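/- arXiv:2008.09282 — 11 statements merged into one kernel-verified Lean document; each statement's English description precedes it below -/
import Mathlib

section
/- Let X be a real normed space and x ∈ S_X. If the star set st(x) = {y ∈ S_X : ‖y + x‖ = 2} is convex, then st(x) is a maximal convex subset of the unit sphere S_X. -/
section

variable {X : Type*} [NormedAddCommGroup X] [NormedSpace ℝ X]

theorem norm_add_eq_two_of_convex_subset_unit_sphere {C : Set X} (hC : Convex ℝ C)
    (hCS : C ⊆ {y : X | ‖y‖ = 1}) {x y : X} (hx : x ∈ C) (hy : y ∈ C) : ‖x + y‖ = 2 := by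
  have hmid : ‖(1 / 2 : ℝ) • x + (1 / 2 : ℝ) • y‖ = 1 :=
    hCS (hC hx hy (by norm_num) (by norm_num) (by norm_num))
  rw [← smul_add, norm_smul] at hmid
  norm_num at hmid
  linarith

theorem norm_self_add_self_of_norm_eq_one {x : X} (hx : ‖x‖ = 1) : ‖x + x‖ = 2 := by
  rw [← two_smul ℝ x, norm_smul, hx]
  norm_num

end

theorem stmt0_general {X : Type*} [NormedAddCommGroup X] [NormedSpace ℝ X]
    (x : X) (hx : ‖x‖ = 1) :
    ∀ C : Set X, Convex ℝ C → C ⊆ {y : X | ‖y‖ = 1} →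
      {y : X | ‖y‖ = 1 ∧ ‖y + x‖ = 2} ⊆ C →
      C = {y : X | ‖y‖ = 1 ∧ ‖y + x‖ = 2} := by
  intro C hC hCS hstC
  have hxC : x ∈ C := hstC ⟨hx, norm_self_add_self_of_norm_eq_one hx⟩
  refine Set.Subset.antisymm (fun y hy => ⟨hCS hy, ?_⟩) hstC
  exact norm_add_eq_two_of_convex_subset_unit_sphere hC hCS hy hxC

theorem stmt0 {X : Type*} [NormedAddCommGroup X] [NormedSpace ℝ X]
    (x : X) (hx : ‖x‖ = 1)
    (hconv : Convex ℝ {y : X | ‖y‖ = 1 ∧ ‖y + x‖ = 2}) :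
    ∀ C : Set X, Convex ℝ C → C ⊆ {y : X | ‖y‖ = 1} →
      {y : X | ‖y‖ = 1 ∧ ‖y + x‖ = 2} ⊆ C →
      C = {y : X | ‖y‖ = 1 ∧ ‖y + x‖ = 2} :=
  stmt0_general x hx
end

section
/- Let X and Y be real normed spaces and T : S_X → S_Y a surjective phase-isometry. Then T is injective and T(-x) = -T(x) for all x ∈ S_X; consequently T⁻¹ is also a surjective phase-isometry. -/
/-!
Two unit vectors are equal up to sign exactly when `0` is one of `‖x + y‖`, `‖x - y‖`, so a
phase-isometry `T` preserves and reflects the relation `x = ±y`. If `T z = -T x`, then `z = ±x`,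
and `z = x` would give `T x = -T x`; hence `T (-x) = -T x`. Then `T x = T y` forces `x = ±y`, and
`x = -y` is excluded by oddness. The inverse of `T` on the sphere inherits the phase identity
because `T (T⁻¹ y) = y`.
-/

open Function Set

theorem zero_mem_norm_add_norm_sub_iff {E : Type*} [NormedAddCommGroup E] (x y : E) :
    (0 : ℝ) ∈ ({‖x + y‖, ‖x - y‖} : Set ℝ) ↔ x = -y ∨ x = y := by
  simp only [mem_insert_iff, mem_singleton_iff, eq_comm (a := (0 : ℝ)), norm_eq_zero,
    add_eq_zero_iff_eq_neg, sub_eq_zero]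

theorem self_ne_neg_of_ne_zero {K E : Type*} [Field K] [CharZero K] [AddCommGroup E] [Module K E]
    {u : E} (hu : u ≠ 0) : u ≠ -u := by
  intro h
  have h2 : (2 : K) • u = 0 := by rw [two_smul]; nth_rw 2 [h]; exact add_neg_cancel u
  exact hu ((smul_eq_zero.mp h2).resolve_left two_ne_zero)

theorem ne_neg_of_norm_eq_one {E : Type*} [NormedAddCommGroup E] [NormedSpace ℝ E] {u : E}
    (hu : ‖u‖ = 1) : u ≠ -u :=
  self_ne_neg_of_ne_zero (K := ℝ) (norm_ne_zero_iff.mp (hu ▸ one_ne_zero))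

section PhaseIsometry

variable {X Y : Type*} [NormedAddCommGroup X] [NormedAddCommGroup Y] {T : X → Y}

theorem eq_or_eq_neg_iff_of_phase
    (hphase : ∀ x y : X, ‖x‖ = 1 → ‖y‖ = 1 →
      ({‖T x + T y‖, ‖T x - T y‖} : Set ℝ) = {‖x + y‖, ‖x - y‖})
    {x y : X} (hx : ‖x‖ = 1) (hy : ‖y‖ = 1) :
    T x = -T y ∨ T x = T y ↔ x = -y ∨ x = y := by
  rw [← zero_mem_norm_add_norm_sub_iff, ← zero_mem_norm_add_norm_sub_iff, hphase x y hx hy]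

variable [NormedSpace ℝ Y]

theorem map_neg_of_phase
    (hmap : ∀ x : X, ‖x‖ = 1 → ‖T x‖ = 1)
    (hsurj : ∀ y : Y, ‖y‖ = 1 → ∃ x : X, ‖x‖ = 1 ∧ T x = y)
    (hphase : ∀ x y : X, ‖x‖ = 1 → ‖y‖ = 1 →
      ({‖T x + T y‖, ‖T x - T y‖} : Set ℝ) = {‖x + y‖, ‖x - y‖})
    {x : X} (hx : ‖x‖ = 1) : T (-x) = -T x := by
  obtain ⟨z, hz, hTz⟩ := hsurj (-T x) (by rw [norm_neg, hmap x hx])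
  rcases (eq_or_eq_neg_iff_of_phase hphase hz hx).mp (Or.inl hTz) with rfl | rfl
  · exact hTz
  · exact absurd hTz (ne_neg_of_norm_eq_one (hmap z hx))

theorem injOn_of_phase
    (hmap : ∀ x : X, ‖x‖ = 1 → ‖T x‖ = 1)
    (hsurj : ∀ y : Y, ‖y‖ = 1 → ∃ x : X, ‖x‖ = 1 ∧ T x = y)
    (hphase : ∀ x y : X, ‖x‖ = 1 → ‖y‖ = 1 →
      ({‖T x + T y‖, ‖T x - T y‖} : Set ℝ) = {‖x + y‖, ‖x - y‖}) :
    InjOn T {x : X | ‖x‖ = 1} := by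
  intro x hx y hy hxy
  rcases (eq_or_eq_neg_iff_of_phase hphase hx hy).mp (Or.inr hxy) with rfl | rfl
  · rw [map_neg_of_phase hmap hsurj hphase hy] at hxy
    exact absurd hxy.symm (ne_neg_of_norm_eq_one (hmap y hy))
  · rfl

end PhaseIsometry

theorem stmt2_general {X Y : Type*} [NormedAddCommGroup X]
    [NormedAddCommGroup Y] [NormedSpace ℝ Y] (T : X → Y)
    (hmap : ∀ x : X, ‖x‖ = 1 → ‖T x‖ = 1)
    (hsurj : ∀ y : Y, ‖y‖ = 1 → ∃ x : X, ‖x‖ = 1 ∧ T x = y)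
    (hphase : ∀ x y : X, ‖x‖ = 1 → ‖y‖ = 1 →
      ({‖T x + T y‖, ‖T x - T y‖} : Set ℝ) = {‖x + y‖, ‖x - y‖}) :
    Set.InjOn T {x : X | ‖x‖ = 1} ∧
    (∀ x : X, ‖x‖ = 1 → T (-x) = -T x) ∧
    ∃ S : Y → X,
      (∀ y : Y, ‖y‖ = 1 → ‖S y‖ = 1) ∧
      (∀ x : X, ‖x‖ = 1 → ∃ y : Y, ‖y‖ = 1 ∧ S y = x) ∧
      (∀ y z : Y, ‖y‖ = 1 → ‖z‖ = 1 →
        ({‖S y + S z‖, ‖S y - S z‖} : Set ℝ) = {‖y + z‖, ‖y - z‖}) ∧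
      (∀ x : X, ‖x‖ = 1 → S (T x) = x) := by
  have hinj := injOn_of_phase hmap hsurj hphase
  let S := invFunOn T {x : X | ‖x‖ = 1}
  have hTS : ∀ y : Y, ‖y‖ = 1 → ‖S y‖ = 1 ∧ T (S y) = y := fun y hy =>
    invFunOn_pos (hsurj y hy)
  have hST : ∀ x : X, ‖x‖ = 1 → S (T x) = x := fun x hx => hinj.leftInvOn_invFunOn hx
  refine ⟨hinj, fun x hx => map_neg_of_phase hmap hsurj hphase hx, S,
    fun y hy => (hTS y hy).1, fun x hx => ⟨T x, hmap x hx, hST x hx⟩, ?_, hST⟩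
  intro y z hy hz
  have h := hphase (S y) (S z) (hTS y hy).1 (hTS z hz).1
  rwa [(hTS y hy).2, (hTS z hz).2, eq_comm] at h

theorem stmt2 {X Y : Type*} [NormedAddCommGroup X] [NormedSpace ℝ X]
    [NormedAddCommGroup Y] [NormedSpace ℝ Y] (T : X → Y)
    (hmap : ∀ x : X, ‖x‖ = 1 → ‖T x‖ = 1)
    (hsurj : ∀ y : Y, ‖y‖ = 1 → ∃ x : X, ‖x‖ = 1 ∧ T x = y)
    (hphase : ∀ x y : X, ‖x‖ = 1 → ‖y‖ = 1 →
      ({‖T x + T y‖, ‖T x - T y‖} : Set ℝ) = {‖x + y‖, ‖x - y‖}) :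
    Set.InjOn T {x : X | ‖x‖ = 1} ∧
    (∀ x : X, ‖x‖ = 1 → T (-x) = -T x) ∧
    ∃ S : Y → X,
      (∀ y : Y, ‖y‖ = 1 → ‖S y‖ = 1) ∧
      (∀ x : X, ‖x‖ = 1 → ∃ y : Y, ‖y‖ = 1 ∧ S y = x) ∧
      (∀ y z : Y, ‖y‖ = 1 → ‖z‖ = 1 →
        ({‖S y + S z‖, ‖S y - S z‖} : Set ℝ) = {‖y + z‖, ‖y - z‖}) ∧
      (∀ x : X, ‖x‖ = 1 → S (T x) = x) :=
  stmt2_general T hmap hsurj hphase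
end

section
/- Let X and Y be real normed spaces and T : S_X → S_Y a surjective phase-isometry. Then for every x ∈ S_X, the star set st(x) is a maximal convex subset of S_X if and only if st(T(x)) is a maximal convex subset of S_Y. -/
/-!
Any convex subset of the unit sphere that contains `x` lies in `st(x)`: the midpoint of `c` and
`x` has norm one, so `‖c + x‖ = 2`. Hence `st(x)` is a maximal convex subset of the sphere exactly
when it is convex. Convexity of `st(x)` is in turn equivalent to the condition that any two
`y, z ∈ st(x) ∪ -st(x)` satisfy `2 ∈ {‖y + z‖, ‖y - z‖}`; for the converse one replaces
`y, z ∈ st(x)` by the midpoints `(x + y)/2, (x + z)/2`, which still lie in `st(x)` but are at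
distance at most one, so their sum has norm two, and the whole segment between them lies on the
sphere. That condition only involves the sets `{‖y + z‖, ‖y - z‖}`, which a surjective
phase-isometry preserves.
-/

open Set

section StarSet

variable {E : Type*} [SeminormedAddCommGroup E]

def starSet (x : E) : Set E := {y | ‖y‖ = 1 ∧ ‖y + x‖ = 2}

/-- `st(x) ∪ -st(x)`, phrased through the set `{‖y + x‖, ‖y - x‖}` that a phase-isometry
preserves. -/
def symmStarSet (x : E) : Set E := {y | ‖y‖ = 1 ∧ (2 : ℝ) ∈ ({‖y + x‖, ‖y - x‖} : Set ℝ)}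

lemma starSet_subset_sphere (x : E) : starSet x ⊆ {y | ‖y‖ = 1} := fun _ hy => hy.1

lemma mem_starSet_of_norm_le_one {x w : E} (hx : ‖x‖ = 1) (hw : ‖w‖ ≤ 1)
    (hwx : ‖w + x‖ = 2) : w ∈ starSet x := by
  refine ⟨le_antisymm hw ?_, hwx⟩
  have := norm_add_le w x
  linarith

lemma starSet_subset_symmStarSet (x : E) : starSet x ⊆ symmStarSet x :=
  fun _ hy => ⟨hy.1, Or.inl hy.2.symm⟩

lemma neg_mem_symmStarSet_iff {x y : E} : -y ∈ symmStarSet x ↔ y ∈ symmStarSet x := by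
  simp only [symmStarSet, mem_ofPred_eq, norm_neg]
  rw [neg_add_eq_sub, norm_sub_rev, ← neg_add', norm_neg, pair_comm]

lemma mem_symmStarSet_neg_iff {x y : E} : y ∈ symmStarSet (-x) ↔ y ∈ symmStarSet x := by
  simp only [symmStarSet, mem_ofPred_eq, sub_neg_eq_add, ← sub_eq_add_neg, pair_comm]

lemma mem_symmStarSet_iff {x y : E} : y ∈ symmStarSet x ↔ y ∈ starSet x ∨ -y ∈ starSet x := by
  simp only [symmStarSet, starSet, mem_ofPred_eq, mem_insert_iff, mem_singleton_iff, norm_neg]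
  rw [neg_add_eq_sub, norm_sub_rev, eq_comm (a := (2 : ℝ)), eq_comm (a := (2 : ℝ))]
  tauto

variable [NormedSpace ℝ E]

lemma self_mem_starSet {x : E} (hx : ‖x‖ = 1) : x ∈ starSet x := by
  refine ⟨hx, ?_⟩
  rw [← two_smul ℝ x, norm_smul, hx]
  norm_num

lemma norm_smul_add_smul_le_one {y z : E} (hy : ‖y‖ = 1) (hz : ‖z‖ = 1) {a b : ℝ}
    (ha : 0 ≤ a) (hb : 0 ≤ b) (hab : a + b = 1) : ‖a • y + b • z‖ ≤ 1 :=
  calc ‖a • y + b • z‖ ≤ ‖a • y‖ + ‖b • z‖ := norm_add_le _ _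
    _ = 1 := by
      rw [norm_smul, norm_smul, Real.norm_of_nonneg ha, Real.norm_of_nonneg hb, hy, hz]
      linarith

lemma norm_smul_add_smul_eq_one_of_norm_add_eq_two {y z : E} (hy : ‖y‖ = 1) (hz : ‖z‖ = 1)
    (h : ‖y + z‖ = 2) {a b : ℝ} (ha : 0 ≤ a) (hb : 0 ≤ b) (hab : a + b = 1) :
    ‖a • y + b • z‖ = 1 := by
  have upper := norm_smul_add_smul_le_one hy hz ha hb hab
  -- Compare with `c • (y + z)`, of norm `2c`, for `c = max a b`.
  set c := max a b
  have hc : 0 ≤ c := ha.trans (le_max_left a b)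
  have hca : 0 ≤ c - a := sub_nonneg.2 (le_max_left a b)
  have hcb : 0 ≤ c - b := sub_nonneg.2 (le_max_right a b)
  have lower : 2 * c ≤ ‖a • y + b • z‖ + (2 * c - 1) := by
    calc 2 * c = ‖c • (y + z)‖ := by rw [norm_smul, h, Real.norm_of_nonneg hc]; ring
      _ = ‖(a • y + b • z) + ((c - a) • y + (c - b) • z)‖ := by congr 1; module
      _ ≤ ‖a • y + b • z‖ + (‖(c - a) • y‖ + ‖(c - b) • z‖) :=
        (norm_add_le _ _).trans (add_le_add_right (norm_add_le _ _) _)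
      _ = ‖a • y + b • z‖ + (2 * c - 1) := by
        rw [norm_smul, norm_smul, Real.norm_of_nonneg hca, Real.norm_of_nonneg hcb, hy, hz]
        linarith
  linarith

lemma segment_subset_starSet {x y : E} (hx : ‖x‖ = 1) (hy : y ∈ starSet x) :
    segment ℝ x y ⊆ starSet x := by
  rintro _ ⟨a, b, ha, hb, hab, rfl⟩
  have hxy : ‖x + y‖ = 2 := by rw [add_comm]; exact hy.2
  refine ⟨norm_smul_add_smul_eq_one_of_norm_add_eq_two hx hy.1 hxy ha hb hab, ?_⟩
  have e : a • x + b • y + x = (2 : ℝ) • (((1 + a) / 2) • x + (b / 2) • y) := by module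
  rw [e, norm_smul, norm_smul_add_smul_eq_one_of_norm_add_eq_two hx hy.1 hxy (by linarith)
    (by linarith) (by linarith)]
  norm_num

lemma norm_add_eq_two_of_convex {C : Set E} (hC : Convex ℝ C) (hCs : C ⊆ {y | ‖y‖ = 1})
    {u v : E} (hu : u ∈ C) (hv : v ∈ C) : ‖u + v‖ = 2 := by
  have hmid : ‖(1 / 2 : ℝ) • u + (1 / 2 : ℝ) • v‖ = 1 :=
    hCs (hC hu hv (by norm_num) (by norm_num) (by norm_num))
  rw [← smul_add, norm_smul, Real.norm_of_nonneg (by norm_num)] at hmid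
  linarith

lemma subset_starSet_of_convex {C : Set E} (hC : Convex ℝ C) (hCs : C ⊆ {y | ‖y‖ = 1})
    {x : E} (hx : x ∈ C) : C ⊆ starSet x :=
  fun _ hc => ⟨hCs hc, norm_add_eq_two_of_convex hC hCs hc hx⟩

lemma maximal_starSet {x : E} (hx : ‖x‖ = 1) (C : Set E) (hC : Convex ℝ C)
    (hCs : C ⊆ {y | ‖y‖ = 1}) (hsub : starSet x ⊆ C) : C = starSet x :=
  (subset_starSet_of_convex hC hCs (hsub (self_mem_starSet hx))).antisymm hsub

lemma convex_starSet_iff {x : E} (hx : ‖x‖ = 1) :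
    Convex ℝ (starSet x) ↔
      ∀ y ∈ symmStarSet x, ∀ z ∈ symmStarSet x, z ∈ symmStarSet y := by
  constructor
  · intro hconv y hy z hz
    have pair : ∀ u ∈ starSet x, ∀ v ∈ starSet x, v ∈ symmStarSet u := fun u hu v hv =>
      ⟨hv.1, Or.inl (by rw [add_comm]; exact (norm_add_eq_two_of_convex hconv
        (starSet_subset_sphere x) hu hv).symm)⟩
    rcases mem_symmStarSet_iff.1 hy with hy' | hy' <;>
      rcases mem_symmStarSet_iff.1 hz with hz' | hz' <;>
      simpa only [neg_mem_symmStarSet_iff, mem_symmStarSet_neg_iff] using pair _ hy' _ hz'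
  · intro hpair y hy z hz a b ha hb hab
    have mid : ∀ {w}, w ∈ starSet x → (1 / 2 : ℝ) • x + (1 / 2 : ℝ) • w ∈ starSet x :=
      fun hw => segment_subset_starSet hx hw
        ⟨1 / 2, 1 / 2, by norm_num, by norm_num, by norm_num, rfl⟩
    set y' := (1 / 2 : ℝ) • x + (1 / 2 : ℝ) • y
    set z' := (1 / 2 : ℝ) • x + (1 / 2 : ℝ) • z
    have hyz' : ‖y' + z'‖ = 2 := by
      have hdist : ‖z' - y'‖ ≤ 1 := by
        have e : z' - y' = (1 / 2 : ℝ) • (z - y) := by module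
        have := norm_sub_le z y
        rw [e, norm_smul, Real.norm_of_nonneg (by norm_num)]
        linarith [hy.1, hz.1]
      rcases (hpair y' (starSet_subset_symmStarSet x (mid hy))
        z' (starSet_subset_symmStarSet x (mid hz))).2 with h | h
      · rw [add_comm]; exact h.symm
      · linarith [mem_singleton_iff.1 h]
    have hw : ‖a • y' + b • z'‖ = 1 :=
      norm_smul_add_smul_eq_one_of_norm_add_eq_two (mid hy).1 (mid hz).1 hyz' ha hb hab
    have e : a • y' + b • z' = (1 / 2 : ℝ) • (a • y + b • z + (a + b) • x) := by module
    rw [hab, one_smul] at e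
    rw [e, norm_smul, Real.norm_of_nonneg (by norm_num)] at hw
    exact mem_starSet_of_norm_le_one hx (norm_smul_add_smul_le_one hy.1 hz.1 ha hb hab)
      (by linarith)

end StarSet

section PhaseIsometry

variable {X Y : Type*} [SeminormedAddCommGroup X] [SeminormedAddCommGroup Y] {T : X → Y}

lemma map_mem_symmStarSet_iff (hmap : ∀ x : X, ‖x‖ = 1 → ‖T x‖ = 1)
    (hphase : ∀ x y : X, ‖x‖ = 1 → ‖y‖ = 1 →
      ({‖T x + T y‖, ‖T x - T y‖} : Set ℝ) = {‖x + y‖, ‖x - y‖})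
    {x y : X} (hx : ‖x‖ = 1) (hy : ‖y‖ = 1) :
    T y ∈ symmStarSet (T x) ↔ y ∈ symmStarSet x := by
  simp only [symmStarSet, mem_ofPred_eq, hmap y hy, hy, hphase y x hy hx]

lemma forall_mem_symmStarSet_iff_of_phase (hmap : ∀ x : X, ‖x‖ = 1 → ‖T x‖ = 1)
    (hsurj : ∀ y : Y, ‖y‖ = 1 → ∃ x : X, ‖x‖ = 1 ∧ T x = y)
    (hphase : ∀ x y : X, ‖x‖ = 1 → ‖y‖ = 1 →
      ({‖T x + T y‖, ‖T x - T y‖} : Set ℝ) = {‖x + y‖, ‖x - y‖})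
    {x : X} (hx : ‖x‖ = 1) :
    (∀ y ∈ symmStarSet x, ∀ z ∈ symmStarSet x, z ∈ symmStarSet y) ↔
      ∀ y ∈ symmStarSet (T x), ∀ z ∈ symmStarSet (T x), z ∈ symmStarSet y := by
  constructor
  · intro h u hu v hv
    obtain ⟨y, hy, rfl⟩ := hsurj u hu.1
    obtain ⟨z, hz, rfl⟩ := hsurj v hv.1
    rw [map_mem_symmStarSet_iff hmap hphase hx hy] at hu
    rw [map_mem_symmStarSet_iff hmap hphase hx hz] at hv
    exact (map_mem_symmStarSet_iff hmap hphase hy hz).2 (h y hu z hv)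
  · intro h y hy z hz
    have hy1 : ‖y‖ = 1 := hy.1
    have hz1 : ‖z‖ = 1 := hz.1
    rw [← map_mem_symmStarSet_iff hmap hphase hx hy1] at hy
    rw [← map_mem_symmStarSet_iff hmap hphase hx hz1] at hz
    exact (map_mem_symmStarSet_iff hmap hphase hy1 hz1).1 (h _ hy _ hz)

end PhaseIsometry

theorem stmt3 {X Y : Type*} [NormedAddCommGroup X] [NormedSpace ℝ X]
    [NormedAddCommGroup Y] [NormedSpace ℝ Y] (T : X → Y)
    (hmap : ∀ x : X, ‖x‖ = 1 → ‖T x‖ = 1)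
    (hsurj : ∀ y : Y, ‖y‖ = 1 → ∃ x : X, ‖x‖ = 1 ∧ T x = y)
    (hphase : ∀ x y : X, ‖x‖ = 1 → ‖y‖ = 1 →
      ({‖T x + T y‖, ‖T x - T y‖} : Set ℝ) = {‖x + y‖, ‖x - y‖})
    (x : X) (hx : ‖x‖ = 1) :
    (Convex ℝ {y : X | ‖y‖ = 1 ∧ ‖y + x‖ = 2} ∧
      ∀ C : Set X, Convex ℝ C → C ⊆ {y : X | ‖y‖ = 1} →
        {y : X | ‖y‖ = 1 ∧ ‖y + x‖ = 2} ⊆ C →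
        C = {y : X | ‖y‖ = 1 ∧ ‖y + x‖ = 2}) ↔
    (Convex ℝ {z : Y | ‖z‖ = 1 ∧ ‖z + T x‖ = 2} ∧
      ∀ C : Set Y, Convex ℝ C → C ⊆ {z : Y | ‖z‖ = 1} →
        {z : Y | ‖z‖ = 1 ∧ ‖z + T x‖ = 2} ⊆ C →
        C = {z : Y | ‖z‖ = 1 ∧ ‖z + T x‖ = 2}) := by
  have hTx : ‖T x‖ = 1 := hmap x hx
  have hconvex : Convex ℝ (starSet x) ↔ Convex ℝ (starSet (T x)) := by
    rw [convex_starSet_iff hx, convex_starSet_iff hTx]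
    exact forall_mem_symmStarSet_iff_of_phase hmap hsurj hphase hx
  exact and_congr hconvex (iff_of_true (maximal_starSet hx) (maximal_starSet hTx))
end

section
/- Let X and Y be real normed spaces and T : S_X → S_Y a surjective phase-isometry. Then for every separable subset A ⊂ X, there exist separable closed subspaces X₀ ⊂ X and Y₀ ⊂ Y such that A ⊂ X₀ and T(S_{X₀}) = S_{Y₀}. -/
/-!
A phase-isometry preserves `min (‖x - y‖, ‖x + y‖)` on the unit sphere, so a unit vector `x` lies
in the closure of `D ∪ -D` (for `D` in the sphere) iff `T x` lies in the closure of
`T D ∪ -T D`. Starting from a countable dense subset of `A`, repeatedly add countable dense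
subsets of the unit spheres of the spans on both sides, pulling those in `Y` back through the
surjectivity of `T`. The union `D` is countable, and the unit spheres of `X₀ = closure (span D)`
and `Y₀ = closure (span (T (S_X ∩ D)))` are the closures of `S_X ∩ D` and of its image, which the
equivalence above transports across `T`.
-/

open TopologicalSpace Submodule Set

lemma exists_monotone_countable_seq {α : Type*} (step : Set α → Set α)
    (hstep : ∀ C : Set α, C.Countable → (step C).Countable) {C₀ : Set α} (hC₀ : C₀.Countable) :
    ∃ C : ℕ → Set α, Monotone C ∧ C 0 = C₀ ∧ (∀ n, (C n).Countable) ∧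
      ∀ n, step (C n) ⊆ C (n + 1) := by
  let C : ℕ → Set α := fun n => Nat.rec C₀ (fun _ C => C ∪ step C) n
  have hCc : ∀ n, (C n).Countable := by
    intro n
    induction n with
    | zero => exact hC₀
    | succ n ih => exact ih.union (hstep _ ih)
  exact ⟨C, monotone_nat_of_le_succ fun n => subset_union_left, rfl, hCc,
    fun n => subset_union_right⟩

lemma mem_closure_union_neg_iff {E : Type*} [SeminormedAddCommGroup E] {D : Set E} {x : E} :
    x ∈ closure (D ∪ -D) ↔ ∀ ε > 0, ∃ d ∈ D, ∃ r ∈ ({‖x + d‖, ‖x - d‖} : Set ℝ), r < ε := by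
  rw [Metric.mem_closure_iff]
  refine forall₂_congr fun ε _ => ?_
  simp only [mem_union, mem_insert_iff, mem_singleton_iff, exists_eq_or_imp,
    exists_eq_left, dist_eq_norm]
  constructor
  · rintro ⟨b, hb | hb, hxb⟩
    · exact ⟨b, hb, Or.inr hxb⟩
    · exact ⟨-b, hb, Or.inl (by rwa [← sub_eq_add_neg])⟩
  · rintro ⟨d, hd, h | h⟩
    · exact ⟨-d, Or.inr (neg_mem_neg.2 hd), by rwa [sub_neg_eq_add]⟩
    · exact ⟨d, Or.inl hd, h⟩

section UnitSphere

variable {M : Type*} [NormedAddCommGroup M] [NormedSpace ℝ M]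

lemma unit_inter_closure_subset_closure_unit_inter {s : Set M}
    (hs : ∀ v ∈ s, ∀ c : ℝ, 0 < c → c • v ∈ s) :
    {x | ‖x‖ = 1} ∩ closure s ⊆ closure ({x | ‖x‖ = 1} ∩ s) := by
  rintro x ⟨hx : ‖x‖ = 1, hxs⟩
  have hx0 : x ≠ 0 := norm_ne_zero_iff.1 (by rw [hx]; exact one_ne_zero)
  let normalize : M → M := fun v => ‖v‖⁻¹ • v
  have hcont : ContinuousAt normalize x :=
    (continuous_norm.continuousAt.inv₀ (norm_ne_zero_iff.2 hx0)).smul continuousAt_id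
  have himage : normalize '' s ⊆ {0} ∪ {x | ‖x‖ = 1} ∩ s := by
    rintro _ ⟨v, hv, rfl⟩
    rcases eq_or_ne v 0 with rfl | hv0
    · left; simp [normalize]
    · right
      exact ⟨norm_smul_inv_norm hv0, hs v hv _ (inv_pos.2 (norm_pos_iff.2 hv0))⟩
  have hfix : normalize x = x := by simp only [normalize, hx, inv_one, one_smul]
  have := closure_mono himage (hfix ▸ mem_closure_image hcont hxs)
  rw [closure_union, closure_singleton] at this
  exact this.resolve_left hx0

lemma unit_inter_closure_span_iUnion_subset {ι : Type*} [Nonempty ι] {G : ι → Set M}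
    (hG : Directed (· ⊆ ·) G) {F : Set M} (hF : ∀ i, {x | ‖x‖ = 1} ∩ span ℝ (G i) ⊆ closure F) :
    {x | ‖x‖ = 1} ∩ closure (span ℝ (⋃ i, G i) : Set M) ⊆ closure F := by
  have hspan : (span ℝ (⋃ i, G i) : Set M) = ⋃ i, (span ℝ (G i) : Set M) := by
    rw [span_iUnion]
    exact coe_iSup_of_directed _ (hG.mono_comp (g := span ℝ) _ fun _ _ => span_mono)
  refine (unit_inter_closure_subset_closure_unit_inter fun v hv c _ => smul_mem _ c hv).trans
    (closure_minimal ?_ isClosed_closure)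
  rw [hspan, inter_iUnion]
  exact iUnion_subset hF

lemma isSeparable_unit_inter_span {C : Set M} (hC : C.Countable) :
    IsSeparable ({x | ‖x‖ = 1} ∩ (span ℝ C : Set M)) :=
  hC.isSeparable.span.mono inter_subset_right

lemma closure_union_neg_subset {P : Submodule ℝ M} (hP : IsClosed (P : Set M)) {D : Set M}
    (hD : D ⊆ P) : closure (D ∪ -D) ⊆ P :=
  closure_minimal (union_subset hD fun _ hx => by simpa using P.neg_mem (hD hx)) hP

end UnitSphere

lemma mem_closure_union_neg_image_iff {X Y : Type*} [SeminormedAddCommGroup X]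
    [SeminormedAddCommGroup Y] {T : X → Y}
    (hphase : ∀ x y : X, ‖x‖ = 1 → ‖y‖ = 1 →
      ({‖T x + T y‖, ‖T x - T y‖} : Set ℝ) = {‖x + y‖, ‖x - y‖})
    {D : Set X} (hD : D ⊆ {x | ‖x‖ = 1}) {x : X} (hx : ‖x‖ = 1) :
    T x ∈ closure (T '' D ∪ -(T '' D)) ↔ x ∈ closure (D ∪ -D) := by
  simp only [mem_closure_union_neg_iff, exists_mem_image]
  exact forall₂_congr fun ε _ => exists_congr fun d => and_congr_right fun hd => by
    rw [hphase x d hx (hD hd)]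

section PhaseIsometry

variable {X Y : Type*} [NormedAddCommGroup X] [NormedSpace ℝ X]
  [NormedAddCommGroup Y] [NormedSpace ℝ Y]

lemma image_unit_inter_eq_of_dense {T : X → Y} (hmap : ∀ x : X, ‖x‖ = 1 → ‖T x‖ = 1)
    (hsurj : ∀ y : Y, ‖y‖ = 1 → ∃ x : X, ‖x‖ = 1 ∧ T x = y)
    (hphase : ∀ x y : X, ‖x‖ = 1 → ‖y‖ = 1 →
      ({‖T x + T y‖, ‖T x - T y‖} : Set ℝ) = {‖x + y‖, ‖x - y‖})
    {D : Set X} (hD : D ⊆ {x | ‖x‖ = 1})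
    {X₀ : Submodule ℝ X} (hX₀ : IsClosed (X₀ : Set X)) (hDX₀ : D ⊆ X₀)
    (hX₀D : {x | ‖x‖ = 1} ∩ X₀ ⊆ closure D)
    {Y₀ : Submodule ℝ Y} (hY₀ : IsClosed (Y₀ : Set Y)) (hDY₀ : T '' D ⊆ Y₀)
    (hY₀D : {y | ‖y‖ = 1} ∩ Y₀ ⊆ closure (T '' D)) :
    T '' ({x | ‖x‖ = 1} ∩ X₀) = {y | ‖y‖ = 1} ∩ Y₀ := by
  refine Subset.antisymm ?_ ?_
  · rintro _ ⟨x, ⟨hx, hxX₀⟩, rfl⟩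
    refine ⟨hmap x hx, closure_union_neg_subset hY₀ hDY₀ ?_⟩
    rw [mem_closure_union_neg_image_iff hphase hD hx]
    exact closure_mono subset_union_left (hX₀D ⟨hx, hxX₀⟩)
  · rintro y ⟨hy, hyY₀⟩
    obtain ⟨x, hx, rfl⟩ := hsurj y hy
    refine ⟨x, ⟨hx, closure_union_neg_subset hX₀ hDX₀ ?_⟩, rfl⟩
    rw [← mem_closure_union_neg_image_iff hphase hD hx]
    exact closure_mono subset_union_left (hY₀D ⟨hy, hyY₀⟩)

lemma exists_countable_superset_unit_dense (T : X → Y)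
    (hsurj : ∀ y : Y, ‖y‖ = 1 → ∃ x : X, ‖x‖ = 1 ∧ T x = y) {C₀ : Set X} (hC₀ : C₀.Countable) :
    ∃ D : Set X, D.Countable ∧ C₀ ⊆ D ∧
      {x | ‖x‖ = 1} ∩ closure (span ℝ D : Set X) ⊆ closure ({x | ‖x‖ = 1} ∩ D) ∧
      {y | ‖y‖ = 1} ∩ closure (span ℝ (T '' ({x | ‖x‖ = 1} ∩ D)) : Set Y) ⊆
        closure (T '' ({x | ‖x‖ = 1} ∩ D)) := by
  choose! pre hpre hTpre using hsurj
  have hX : ∀ C : Set X, C.Countable → ∃ E ⊆ {x | ‖x‖ = 1} ∩ (span ℝ C : Set X),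
      E.Countable ∧ {x | ‖x‖ = 1} ∩ (span ℝ C : Set X) ⊆ closure E :=
    fun C hC => (isSeparable_unit_inter_span hC).exists_countable_dense_subset
  have hY : ∀ C : Set X, C.Countable →
      ∃ E ⊆ {y | ‖y‖ = 1} ∩ (span ℝ (T '' ({x | ‖x‖ = 1} ∩ C)) : Set Y),
      E.Countable ∧ {y | ‖y‖ = 1} ∩ (span ℝ (T '' ({x | ‖x‖ = 1} ∩ C)) : Set Y) ⊆ closure E :=
    fun C hC => (isSeparable_unit_inter_span
      ((hC.mono inter_subset_right).image T)).exists_countable_dense_subset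
  choose! E₁ hE₁ hE₁c hE₁d using hX
  choose! E₂ hE₂ hE₂c hE₂d using hY
  obtain ⟨C, hCmono, hC0, hCc, hCstep⟩ := exists_monotone_countable_seq
    (fun C => E₁ C ∪ pre '' E₂ C) (fun C hC => (hE₁c C hC).union ((hE₂c C hC).image pre)) hC₀
  refine ⟨⋃ n, C n, countable_iUnion hCc, hC0 ▸ subset_iUnion C 0, ?_, ?_⟩
  · refine unit_inter_closure_span_iUnion_subset hCmono.directed_le fun n =>
      (hE₁d _ (hCc n)).trans (closure_mono fun e he => ?_)
    exact ⟨(hE₁ _ (hCc n) he).1, mem_iUnion.2 ⟨n + 1, hCstep n (Or.inl he)⟩⟩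
  · rw [inter_iUnion, image_iUnion]
    refine unit_inter_closure_span_iUnion_subset
      (Monotone.directed_le fun m n hmn => image_mono (inter_subset_inter_right _ (hCmono hmn)))
      fun n => (hE₂d _ (hCc n)).trans (closure_mono fun e he => ?_)
    have he1 : ‖e‖ = 1 := (hE₂ _ (hCc n) he).1
    exact mem_iUnion.2 ⟨n + 1, pre e, ⟨hpre e he1, hCstep n (Or.inr ⟨e, he, rfl⟩)⟩, hTpre e he1⟩

end PhaseIsometry

theorem stmt4 {X Y : Type*} [NormedAddCommGroup X] [NormedSpace ℝ X]
    [NormedAddCommGroup Y] [NormedSpace ℝ Y] (T : X → Y)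
    (hmap : ∀ x : X, ‖x‖ = 1 → ‖T x‖ = 1)
    (hsurj : ∀ y : Y, ‖y‖ = 1 → ∃ x : X, ‖x‖ = 1 ∧ T x = y)
    (hphase : ∀ x y : X, ‖x‖ = 1 → ‖y‖ = 1 →
      ({‖T x + T y‖, ‖T x - T y‖} : Set ℝ) = {‖x + y‖, ‖x - y‖})
    (A : Set X) (hA : TopologicalSpace.IsSeparable A) :
    ∃ (X₀ : Subspace ℝ X) (Y₀ : Subspace ℝ Y),
      IsClosed (X₀ : Set X) ∧ IsClosed (Y₀ : Set Y) ∧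
      TopologicalSpace.IsSeparable (X₀ : Set X) ∧
      TopologicalSpace.IsSeparable (Y₀ : Set Y) ∧
      A ⊆ X₀ ∧
      T '' ({x : X | ‖x‖ = 1} ∩ X₀) = {y : Y | ‖y‖ = 1} ∩ Y₀ := by
  obtain ⟨C₀, hC₀, hAC₀⟩ := hA
  obtain ⟨D, hD, hC₀D, hXdense, hYdense⟩ := exists_countable_superset_unit_dense T hsurj hC₀
  set D₁ := {x : X | ‖x‖ = 1} ∩ D
  have hD₁ : D₁.Countable := hD.mono inter_subset_right
  refine ⟨(span ℝ D).topologicalClosure, (span ℝ (T '' D₁)).topologicalClosure,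
    isClosed_topologicalClosure _, isClosed_topologicalClosure _,
    hD.isSeparable.span.closure, (hD₁.image T).isSeparable.span.closure,
    hAC₀.trans (closure_mono (hC₀D.trans subset_span)), ?_⟩
  exact image_unit_inter_eq_of_dense hmap hsurj hphase inter_subset_left
    (isClosed_topologicalClosure _) (inter_subset_right.trans (subset_span.trans subset_closure))
    hXdense (isClosed_topologicalClosure _) (subset_span.trans subset_closure) hYdense
end

section
/- Let K be a compact Hausdorff space. Every maximal convex subset of the unit sphere of C(K) is of the form F_t = {f ∈ S_{C(K)} : f(t) = 1} or -F_t for some t ∈ K. -/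
/-!
If `F` is a convex subset of the unit sphere of `C(K)`, the average `g` of finitely many
`f₁, …, fₙ ∈ F` lies in `F`, so `|g t| = 1` at some `t`; since `|fᵢ t| ≤ 1`, this forces
`fᵢ t = g t = ±1` for all `i`. Hence the closed sets `{(t, c) | f t = c}` of the compact space
`K × {±1}`, for `f ∈ F`, have the finite intersection property, and a common point `(t, c)` gives
`F ⊆ {f | ‖f‖ = 1 ∧ f t = c}`. The latter set is convex, so by maximality it equals `F`.
-/

open Set

theorem ContinuousMap.exists_norm_apply_eq_norm {K E : Type*} [TopologicalSpace K]
    [CompactSpace K] [Nonempty K] [NormedAddCommGroup E] (f : C(K, E)) :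
    ∃ t, ‖f t‖ = ‖f‖ := by
  obtain ⟨t, -, ht⟩ := isCompact_univ.exists_isMaxOn univ_nonempty f.continuous.norm.continuousOn
  exact ⟨t, le_antisymm (f.norm_coe_le_norm t)
    ((f.norm_le (norm_nonneg _)).mpr fun s => ht (mem_univ s))⟩

theorem convex_setOf_norm_eq_one_and_apply_eq {K : Type*} [TopologicalSpace K] [CompactSpace K]
    (t : K) {c : ℝ} (hc : |c| = 1) :
    Convex ℝ {f : C(K, ℝ) | ‖f‖ = 1 ∧ f t = c} := by
  have hball : {f : C(K, ℝ) | ‖f‖ = 1 ∧ f t = c} =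
      Metric.closedBall 0 1 ∩ ContinuousMap.evalCLM ℝ t ⁻¹' {c} := by
    ext f
    simp only [mem_ofPred_eq, mem_inter_iff, mem_closedBall_zero_iff, mem_preimage,
      ContinuousMap.evalCLM_apply, mem_singleton_iff]
    refine ⟨fun h => ⟨h.1.le, h.2⟩, fun h => ⟨h.1.antisymm ?_, h.2⟩⟩
    have := f.norm_coe_le_norm t
    rwa [h.2, Real.norm_eq_abs, hc] at this
  rw [hball]
  exact (convex_closedBall 0 1).inter
    ((convex_singleton c).linear_preimage (ContinuousMap.evalCLM ℝ t).toLinearMap)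

theorem exists_apply_eq_of_convex_of_subset_sphere {K ι : Type*} [TopologicalSpace K]
    [CompactSpace K] [Nonempty K] {F : Set C(K, ℝ)} (hF : F ⊆ {f : C(K, ℝ) | ‖f‖ = 1})
    (hconv : Convex ℝ F) (u : Finset ι) (z : ι → C(K, ℝ)) (hz : ∀ i ∈ u, z i ∈ F) :
    ∃ t c, |c| = 1 ∧ ∀ i ∈ u, z i t = c := by
  rcases u.eq_empty_or_nonempty with rfl | hu
  · exact ⟨Classical.arbitrary K, 1, abs_one, by simp⟩
  set g := u.centerMass (fun _ => (1 : ℝ)) z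
  have hg : ‖g‖ = 1 := hF <| hconv.centerMass_mem (fun _ _ => zero_le_one) (by simpa) hz
  obtain ⟨t, ht⟩ := g.exists_norm_apply_eq_norm
  rw [hg, Real.norm_eq_abs] at ht
  refine ⟨t, g t, ht, ?_⟩
  have hsq : g t * g t = 1 := by rw [← abs_mul_abs_self, ht, one_mul]
  -- The numbers `g t * z i t` are at most `1` and average to `(g t) ^ 2 = 1`.
  have hle : ∀ i ∈ u, g t * z i t ≤ 1 := fun i hi => by
    calc g t * z i t ≤ |g t * z i t| := le_abs_self _
      _ = ‖z i t‖ := by rw [abs_mul, ht, one_mul, Real.norm_eq_abs]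
      _ ≤ ‖z i‖ := (z i).norm_coe_le_norm t
      _ = 1 := hF (hz i hi)
  have hsum : ∑ i ∈ u, g t * z i t = ∑ i ∈ u, 1 := by
    have hgt : g t = (u.card : ℝ)⁻¹ * ∑ i ∈ u, z i t := by
      simp [g, Finset.centerMass]
    have hcard : (u.card : ℝ) ≠ 0 := by exact_mod_cast hu.card_pos.ne'
    rw [← Finset.mul_sum, Finset.sum_const, nsmul_one]
    field_simp at hgt
    linear_combination (u.card : ℝ) * hsq - g t * hgt
  intro i hi
  linear_combination g t * (Finset.sum_eq_sum_iff_of_le hle).mp hsum i hi - z i t * hsq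

theorem stmt6_general {K : Type*} [TopologicalSpace K] [CompactSpace K] [Nonempty K]
    (F : Set C(K, ℝ)) (hF : F ⊆ {f : C(K, ℝ) | ‖f‖ = 1}) (hconv : Convex ℝ F)
    (hmax : ∀ C : Set C(K, ℝ), Convex ℝ C → C ⊆ {f : C(K, ℝ) | ‖f‖ = 1} → F ⊆ C → C = F) :
    ∃ t : K, F = {f : C(K, ℝ) | ‖f‖ = 1 ∧ f t = 1} ∨
      F = -{f : C(K, ℝ) | ‖f‖ = 1 ∧ f t = 1} := by
  obtain ⟨⟨t, c⟩, ⟨-, hc⟩, hp⟩ :=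
    (isCompact_univ.prod (isCompact_sphere (0 : ℝ) 1)).inter_iInter_nonempty
    (fun f : F => {p : K × ℝ | (f : C(K, ℝ)) p.1 = p.2})
    (fun f => isClosed_eq ((f : C(K, ℝ)).continuous.comp continuous_fst) continuous_snd)
    fun u => by
      obtain ⟨t, c, hc, hu⟩ :=
        exists_apply_eq_of_convex_of_subset_sphere hF hconv u (↑) fun f _ => f.2
      exact ⟨(t, c), ⟨mem_univ t, by simpa using hc⟩, by simpa using hu⟩
  rw [mem_sphere_zero_iff_norm, Real.norm_eq_abs] at hc
  have hFc : F = {f : C(K, ℝ) | ‖f‖ = 1 ∧ f t = c} :=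
    (hmax _ (convex_setOf_norm_eq_one_and_apply_eq t hc) (fun f hf => hf.1)
      fun f hf => ⟨hF hf, by simpa using mem_iInter.mp hp ⟨f, hf⟩⟩).symm
  refine ⟨t, ?_⟩
  rcases abs_eq zero_le_one |>.mp hc with rfl | rfl
  · exact Or.inl hFc
  · refine Or.inr (hFc.trans ?_)
    ext f
    simp [neg_eq_iff_eq_neg]

theorem stmt6 {K : Type*} [TopologicalSpace K] [CompactSpace K] [T2Space K] [Nonempty K]
    (F : Set C(K, ℝ)) (hF : F ⊆ {f : C(K, ℝ) | ‖f‖ = 1}) (hconv : Convex ℝ F)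
    (hmax : ∀ C : Set C(K, ℝ), Convex ℝ C → C ⊆ {f : C(K, ℝ) | ‖f‖ = 1} → F ⊆ C → C = F) :
    ∃ t : K, F = {f : C(K, ℝ) | ‖f‖ = 1 ∧ f t = 1} ∨
      F = -{f : C(K, ℝ) | ‖f‖ = 1 ∧ f t = 1} :=
  stmt6_general F hF hconv hmax
end

section
/- Let K, Ω be compact Hausdorff spaces and T : S_{C(K)} → S_{C(Ω)} a surjective phase-isometry. Then for every t ∈ K there exists s ∈ Ω such that T(F_t ∪ -F_t) = F_s ∪ -F_s, and the induced map σ : K → Ω, σ(t) = s, is a homeomorphism. -/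
/-!
Two unit functions `f, g` in `C(X, ℝ)` peak at a common point (`|f| = |g| = 1` there) exactly
when `‖f + g‖ = 2` or `‖f - g‖ = 2`, so a surjective phase-isometry preserves, in both directions,
whether the peak sets of two unit functions meet; and `F_t ∪ -F_t` is the set of unit functions
peaking at `t`. By Urysohn's lemma this meeting relation detects whether a point lies in a peak
set. For fixed `t`, the peak sets of the images of `F_t ∪ -F_t` form a directed family of compact
sets (the peak set of `f * g` is the intersection of those of `f` and `g`), so they share a point
`σ t`, which is unique by Urysohn. The same argument for the inverse correspondence makes `σ`
bijective, and the preimage under `σ` of a closed set is an intersection of peak sets, so `σ` is a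
continuous bijection between compact Hausdorff spaces.
-/

open Set

lemma abs_add_eq_two_or_abs_sub_eq_two {a b : ℝ} (ha : |a| = 1) (hb : |b| = 1) :
    |a + b| = 2 ∨ |a - b| = 2 := by
  rcases abs_eq_abs.1 (ha.trans hb.symm) with rfl | rfl
  · left; rw [← two_mul, abs_mul, ha]; norm_num
  · right; rw [show -b - b = -(2 * b) by ring, abs_neg, abs_mul, hb]; norm_num

namespace ContinuousMap

section Norm

variable {X E : Type*} [TopologicalSpace X] [CompactSpace X] [NormedAddCommGroup E]

lemma exists_norm_apply_eq_norm_s7 [Nonempty X] (f : C(X, E)) : ∃ x, ‖f x‖ = ‖f‖ := by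
  obtain ⟨x, -, hx⟩ := isCompact_univ.exists_isMaxOn univ_nonempty
    (continuous_norm.comp f.continuous).continuousOn
  exact ⟨x, le_antisymm (f.norm_coe_le_norm x)
    ((f.norm_le (norm_nonneg _)).2 fun y => hx (mem_univ y))⟩

lemma norm_eq_of_norm_le_of_norm_apply_eq {f : C(X, E)} {c : ℝ} (hf : ‖f‖ ≤ c) {x : X}
    (hx : ‖f x‖ = c) : ‖f‖ = c :=
  le_antisymm hf (hx ▸ f.norm_coe_le_norm x)

end Norm

variable {X : Type*} [TopologicalSpace X]

def peakSet (f : C(X, ℝ)) : Set X := {x | |f x| = 1}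

@[simp]
lemma mem_peakSet {f : C(X, ℝ)} {x : X} : x ∈ f.peakSet ↔ |f x| = 1 := Iff.rfl

lemma isClosed_peakSet (f : C(X, ℝ)) : IsClosed f.peakSet :=
  isClosed_eq (continuous_abs.comp f.continuous) continuous_const

variable [CompactSpace X] {f g : C(X, ℝ)}

lemma abs_apply_le_one (hf : ‖f‖ = 1) (x : X) : |f x| ≤ 1 :=
  hf ▸ f.norm_coe_le_norm x

lemma peakSet_nonempty (hf : ‖f‖ = 1) : f.peakSet.Nonempty := by
  have : Nonempty X := by
    by_contra hX
    have : ‖f‖ ≤ 0 := (f.norm_le le_rfl).2 fun x => (hX ⟨x⟩).elim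
    linarith
  obtain ⟨x, hx⟩ := f.exists_norm_apply_eq_norm_s7
  exact ⟨x, hx.trans hf⟩

lemma peakSet_mul (hf : ‖f‖ = 1) (hg : ‖g‖ = 1) : (f * g).peakSet = f.peakSet ∩ g.peakSet := by
  ext x
  have hfx := abs_apply_le_one hf x
  have hgx := abs_apply_le_one hg x
  simp only [mem_inter_iff, mem_peakSet, mul_apply, abs_mul]
  constructor
  · intro h
    constructor <;> nlinarith [abs_nonneg (f x), abs_nonneg (g x)]
  · rintro ⟨h₁, h₂⟩
    rw [h₁, h₂, one_mul]

lemma norm_mul_eq_one (hf : ‖f‖ = 1) (hg : ‖g‖ = 1) (h : (f.peakSet ∩ g.peakSet).Nonempty) :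
    ‖f * g‖ = 1 := by
  obtain ⟨x, hx⟩ := h
  rw [← peakSet_mul hf hg] at hx
  exact norm_eq_of_norm_le_of_norm_apply_eq ((norm_mul_le f g).trans_eq (by rw [hf, hg, one_mul]))
    hx

lemma mem_peakSet_inter_of_norm_apply_eq_two (hf : ‖f‖ = 1) (hg : ‖g‖ = 1) {x : X}
    (h : |f x + g x| = 2 ∨ |f x - g x| = 2) : x ∈ f.peakSet ∩ g.peakSet := by
  have hfx := abs_apply_le_one hf x
  have hgx := abs_apply_le_one hg x
  have : |f x| + |g x| ≥ 2 := h.elim (fun h => h ▸ abs_add_le _ _) (fun h => h ▸ abs_sub _ _)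
  exact ⟨le_antisymm hfx (by linarith), le_antisymm hgx (by linarith)⟩

lemma peakSet_inter_nonempty_iff (hf : ‖f‖ = 1) (hg : ‖g‖ = 1) :
    (f.peakSet ∩ g.peakSet).Nonempty ↔ (2 : ℝ) ∈ ({‖f + g‖, ‖f - g‖} : Set ℝ) := by
  have hadd : ‖f + g‖ ≤ 2 := by linarith [norm_add_le f g]
  have hsub : ‖f - g‖ ≤ 2 := by linarith [norm_sub_le f g]
  simp only [mem_insert_iff, mem_singleton_iff, eq_comm (a := (2 : ℝ))]
  constructor
  · rintro ⟨x, hfx, hgx⟩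
    exact (abs_add_eq_two_or_abs_sub_eq_two hfx hgx).imp
      (norm_eq_of_norm_le_of_norm_apply_eq hadd) (norm_eq_of_norm_le_of_norm_apply_eq hsub)
  · have : Nonempty X := (peakSet_nonempty hf).nonempty
    rintro (h | h)
    · obtain ⟨x, hx⟩ := (f + g).exists_norm_apply_eq_norm_s7
      exact ⟨x, mem_peakSet_inter_of_norm_apply_eq_two hf hg (.inl (hx.trans h))⟩
    · obtain ⟨x, hx⟩ := (f - g).exists_norm_apply_eq_norm_s7
      exact ⟨x, mem_peakSet_inter_of_norm_apply_eq_two hf hg (.inr (hx.trans h))⟩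

lemma setOf_apply_eq_one_union_neg (t : X) :
    {f : C(X, ℝ) | ‖f‖ = 1 ∧ f t = 1} ∪ -{f : C(X, ℝ) | ‖f‖ = 1 ∧ f t = 1} =
      {f | ‖f‖ = 1 ∧ t ∈ f.peakSet} := by
  ext f
  simp only [mem_union, mem_neg, mem_ofPred_eq, norm_neg, neg_apply, mem_peakSet,
    abs_eq zero_le_one, neg_eq_iff_eq_neg, ← and_or_left]

variable [T2Space X]

lemma exists_peakSet_separating {A B : Set X} (hA : IsClosed A) (hB : IsClosed B)
    (hAB : Disjoint A B) (hA₀ : A.Nonempty) :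
    ∃ h : C(X, ℝ), ‖h‖ = 1 ∧ A ⊆ h.peakSet ∧ Disjoint h.peakSet B := by
  obtain ⟨h, hB₀, hA₁, h01⟩ := exists_continuous_zero_one_of_isClosed hB hA hAB.symm
  have habs : ∀ x, |h x| = h x := fun x => abs_of_nonneg (h01 x).1
  obtain ⟨a, ha⟩ := hA₀
  refine ⟨h, ?_, fun x hx => ?_, disjoint_left.2 fun x hx hxB => ?_⟩
  · refine norm_eq_of_norm_le_of_norm_apply_eq ((h.norm_le zero_le_one).2 fun x => ?_) (x := a) ?_
    · rw [Real.norm_eq_abs, habs]; exact (h01 x).2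
    · rw [Real.norm_eq_abs, habs, hA₁ ha, Pi.one_apply]
  · rw [mem_peakSet, habs, hA₁ hx, Pi.one_apply]
  · rw [mem_peakSet, hB₀ hxB, Pi.zero_apply, abs_zero] at hx
    exact zero_ne_one hx

lemma mem_peakSet_of_forall_inter_nonempty {x : X}
    (H : ∀ h : C(X, ℝ), ‖h‖ = 1 → x ∈ h.peakSet → (h.peakSet ∩ g.peakSet).Nonempty) :
    x ∈ g.peakSet := by
  by_contra hx
  obtain ⟨h, hh, hxh, hdisj⟩ := exists_peakSet_separating isClosed_singleton
    g.isClosed_peakSet (disjoint_singleton_left.2 hx) (singleton_nonempty x)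
  exact (H h hh (hxh rfl)).not_disjoint hdisj

lemma peakSet_subset_of_forall_inter_nonempty
    (H : ∀ h : C(X, ℝ), ‖h‖ = 1 → (h.peakSet ∩ f.peakSet).Nonempty →
      (h.peakSet ∩ g.peakSet).Nonempty) :
    f.peakSet ⊆ g.peakSet := fun x hx =>
  mem_peakSet_of_forall_inter_nonempty fun h hh hxh => H h hh ⟨x, hxh, hx⟩

end ContinuousMap

open ContinuousMap

section Correspondence

variable {X Y : Type*} [TopologicalSpace X] [TopologicalSpace Y] [CompactSpace X] [CompactSpace Y]

/-- Stated for a relation rather than a map so that it is symmetric under `flip`: the graph of a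
surjective phase-isometry is the case of interest. -/
structure IsPeakCorrespondence (Φ : C(X, ℝ) → C(Y, ℝ) → Prop) : Prop where
  norm_left {f g} : Φ f g → ‖f‖ = 1
  norm_right {f g} : Φ f g → ‖g‖ = 1
  exists_right {f} : ‖f‖ = 1 → ∃ g, Φ f g
  exists_left {g} : ‖g‖ = 1 → ∃ f, Φ f g
  inter_nonempty_iff {f g f' g'} : Φ f g → Φ f' g' →
    ((f.peakSet ∩ f'.peakSet).Nonempty ↔ (g.peakSet ∩ g'.peakSet).Nonempty)

def PeakMatch (Φ : C(X, ℝ) → C(Y, ℝ) → Prop) (t : X) (s : Y) : Prop :=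
  ∀ f g, Φ f g → t ∈ f.peakSet → s ∈ g.peakSet

namespace IsPeakCorrespondence

variable {Φ : C(X, ℝ) → C(Y, ℝ) → Prop}

lemma symm (hΦ : IsPeakCorrespondence Φ) : IsPeakCorrespondence (flip Φ) where
  norm_left := hΦ.norm_right
  norm_right := hΦ.norm_left
  exists_right := hΦ.exists_left
  exists_left := hΦ.exists_right
  inter_nonempty_iff h h' := (hΦ.inter_nonempty_iff h h').symm

lemma peakMatch_symm [T2Space X] (hΦ : IsPeakCorrespondence Φ) {t : X} {s : Y}
    (h : PeakMatch Φ t s) : PeakMatch (flip Φ) s t := fun g f hfg hs =>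
  mem_peakSet_of_forall_inter_nonempty fun k hk htk => by
    obtain ⟨l, hkl⟩ := hΦ.exists_right hk
    exact (hΦ.inter_nonempty_iff hkl hfg).2 ⟨s, h k l hkl htk, hs⟩

variable [T2Space Y]

lemma peakSet_subset_peakSet (hΦ : IsPeakCorrespondence Φ) {f f' : C(X, ℝ)} {g g' : C(Y, ℝ)}
    (hfg : Φ f g) (hfg' : Φ f' g') (hff' : f.peakSet ⊆ f'.peakSet) : g.peakSet ⊆ g'.peakSet :=
  peakSet_subset_of_forall_inter_nonempty fun h hh hhg => by
    obtain ⟨k, hkh⟩ := hΦ.exists_left hh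
    obtain ⟨x, hxk, hxf⟩ := (hΦ.inter_nonempty_iff hkh hfg).2 hhg
    exact (hΦ.inter_nonempty_iff hkh hfg').1 ⟨x, hxk, hff' hxf⟩

lemma exists_peakMatch (hΦ : IsPeakCorrespondence Φ) (t : X) : ∃ s, PeakMatch Φ t s := by
  let ι := {p : C(X, ℝ) × C(Y, ℝ) // Φ p.1 p.2 ∧ t ∈ p.1.peakSet}
  have : Nonempty ι := by
    have : Nonempty X := ⟨t⟩
    obtain ⟨g, hg⟩ := hΦ.exists_right (f := 1) norm_one
    exact ⟨⟨(1, g), hg, by simp⟩⟩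
  have hdir : Directed (· ⊇ ·) fun p : ι => p.1.2.peakSet := by
    rintro ⟨⟨f, g⟩, hfg, hf⟩ ⟨⟨f', g'⟩, hfg', hf'⟩
    have hf₁ := hΦ.norm_left hfg
    have hf₁' := hΦ.norm_left hfg'
    obtain ⟨g'', hg''⟩ := hΦ.exists_right (norm_mul_eq_one hf₁ hf₁' ⟨t, hf, hf'⟩)
    refine ⟨⟨(f * f', g''), hg'', (peakSet_mul hf₁ hf₁').symm ▸ ⟨hf, hf'⟩⟩, ?_, ?_⟩
    · exact hΦ.peakSet_subset_peakSet hg'' hfg (peakSet_mul hf₁ hf₁' ▸ inter_subset_left)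
    · exact hΦ.peakSet_subset_peakSet hg'' hfg' (peakSet_mul hf₁ hf₁' ▸ inter_subset_right)
  obtain ⟨s, hs⟩ := IsCompact.nonempty_iInter_of_directed_nonempty_isCompact_isClosed _ hdir
    (fun p => peakSet_nonempty (hΦ.norm_right p.2.1))
    (fun p => p.1.2.isClosed_peakSet.isCompact) (fun p => p.1.2.isClosed_peakSet)
  exact ⟨s, fun f g hfg hf => mem_iInter.1 hs ⟨(f, g), hfg, hf⟩⟩

variable [T2Space X]

lemma peakMatch_unique (hΦ : IsPeakCorrespondence Φ) {t : X} {s s' : Y}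
    (h : PeakMatch Φ t s) (h' : PeakMatch Φ t s') : s = s' := by
  by_contra hne
  obtain ⟨g, hg, hsg, hs'g⟩ := exists_peakSet_separating isClosed_singleton isClosed_singleton
    (disjoint_singleton.2 hne) (singleton_nonempty s)
  obtain ⟨f, hfg⟩ := hΦ.exists_left hg
  exact disjoint_singleton_right.1 hs'g (h' f g hfg (hΦ.peakMatch_symm h g f hfg (hsg rfl)))

lemma continuous_of_peakMatch (hΦ : IsPeakCorrespondence Φ) {σ : X → Y}
    (hσ : ∀ t, PeakMatch Φ t (σ t)) : Continuous σ := by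
  refine continuous_iff_isClosed.2 fun C hC => ?_
  rcases C.eq_empty_or_nonempty with rfl | hC₀
  · simp
  suffices σ ⁻¹' C = ⋂ p : {p : C(X, ℝ) × C(Y, ℝ) // Φ p.1 p.2 ∧ C ⊆ p.2.peakSet}, p.1.1.peakSet by
    rw [this]
    exact isClosed_iInter fun p => p.1.1.isClosed_peakSet
  refine Subset.antisymm (fun t ht => mem_iInter.2 fun p =>
    hΦ.peakMatch_symm (hσ t) _ _ p.2.1 (p.2.2 ht)) fun t ht => ?_
  by_contra hσt
  obtain ⟨g, hg, hCg, hgσt⟩ := exists_peakSet_separating hC isClosed_singleton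
    (disjoint_singleton_right.2 hσt) hC₀
  obtain ⟨f, hfg⟩ := hΦ.exists_left hg
  exact disjoint_singleton_right.1 hgσt (hσ t f g hfg (mem_iInter.1 ht ⟨(f, g), hfg, hCg⟩))

theorem exists_homeomorph (hΦ : IsPeakCorrespondence Φ) :
    ∃ σ : X ≃ₜ Y, ∀ t f g, Φ f g → (t ∈ f.peakSet ↔ σ t ∈ g.peakSet) := by
  choose σ hσ using hΦ.exists_peakMatch
  have hinj : σ.Injective := fun t t' h =>
    hΦ.symm.peakMatch_unique (hΦ.peakMatch_symm (hσ t)) (h ▸ hΦ.peakMatch_symm (hσ t'))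
  have hsurj : σ.Surjective := fun s => by
    obtain ⟨t, ht⟩ := hΦ.symm.exists_peakMatch s
    exact ⟨t, hΦ.peakMatch_unique (hσ t) (hΦ.symm.peakMatch_symm ht)⟩
  exact ⟨(hΦ.continuous_of_peakMatch hσ).homeoOfEquivCompactToT2
      (f := Equiv.ofBijective σ ⟨hinj, hsurj⟩),
    fun t f g hfg => ⟨hσ t f g hfg, hΦ.peakMatch_symm (hσ t) g f hfg⟩⟩

end IsPeakCorrespondence

end Correspondence

lemma isPeakCorrespondence_of_phase {K Ω : Type*} [TopologicalSpace K] [CompactSpace K]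
    [TopologicalSpace Ω] [CompactSpace Ω]
    {T : C(K, ℝ) → C(Ω, ℝ)} (hmap : ∀ f : C(K, ℝ), ‖f‖ = 1 → ‖T f‖ = 1)
    (hsurj : ∀ g : C(Ω, ℝ), ‖g‖ = 1 → ∃ f : C(K, ℝ), ‖f‖ = 1 ∧ T f = g)
    (hphase : ∀ f g : C(K, ℝ), ‖f‖ = 1 → ‖g‖ = 1 →
      ({‖T f + T g‖, ‖T f - T g‖} : Set ℝ) = {‖f + g‖, ‖f - g‖}) :
    IsPeakCorrespondence fun f g => ‖f‖ = 1 ∧ T f = g where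
  norm_left h := h.1
  norm_right := by rintro f _ ⟨hf, rfl⟩; exact hmap f hf
  exists_right hf := ⟨_, hf, rfl⟩
  exists_left hg := hsurj _ hg
  inter_nonempty_iff := by
    rintro f _ f' _ ⟨hf, rfl⟩ ⟨hf', rfl⟩
    rw [peakSet_inter_nonempty_iff hf hf', peakSet_inter_nonempty_iff (hmap f hf) (hmap f' hf'),
      hphase f f' hf hf']

theorem stmt7 {K Ω : Type*} [TopologicalSpace K] [CompactSpace K] [T2Space K]
    [TopologicalSpace Ω] [CompactSpace Ω] [T2Space Ω]
    (T : C(K, ℝ) → C(Ω, ℝ))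
    (hmap : ∀ f : C(K, ℝ), ‖f‖ = 1 → ‖T f‖ = 1)
    (hsurj : ∀ g : C(Ω, ℝ), ‖g‖ = 1 → ∃ f : C(K, ℝ), ‖f‖ = 1 ∧ T f = g)
    (hphase : ∀ f g : C(K, ℝ), ‖f‖ = 1 → ‖g‖ = 1 →
      ({‖T f + T g‖, ‖T f - T g‖} : Set ℝ) = {‖f + g‖, ‖f - g‖}) :
    ∃ σ : K ≃ₜ Ω, ∀ t : K,
      T '' ({f : C(K, ℝ) | ‖f‖ = 1 ∧ f t = 1} ∪ -{f : C(K, ℝ) | ‖f‖ = 1 ∧ f t = 1}) =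
        {g : C(Ω, ℝ) | ‖g‖ = 1 ∧ g (σ t) = 1} ∪
          -{g : C(Ω, ℝ) | ‖g‖ = 1 ∧ g (σ t) = 1} := by
  obtain ⟨σ, hσ⟩ := (isPeakCorrespondence_of_phase hmap hsurj hphase).exists_homeomorph
  refine ⟨σ, fun t => ?_⟩
  rw [setOf_apply_eq_one_union_neg, setOf_apply_eq_one_union_neg]
  ext g
  constructor
  · rintro ⟨f, ⟨hf, hft⟩, rfl⟩
    exact ⟨hmap f hf, (hσ t f _ ⟨hf, rfl⟩).1 hft⟩
  · rintro ⟨hg, hgσt⟩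
    obtain ⟨f, hf, rfl⟩ := hsurj g hg
    exact ⟨f, ⟨hf, (hσ t f _ ⟨hf, rfl⟩).2 hgσt⟩, rfl⟩
end

section
/- Let K, Ω be compact Hausdorff spaces and T : S_{C(K)} → S_{C(Ω)} a surjective phase-isometry. Then T(e) is an extreme point of the closed unit ball of C(Ω) if and only if e is an extreme point of the closed unit ball of C(K). -/
/-!
A function `e` in the unit ball of `C(X, ℝ)` is an extreme point iff `|e| ≡ 1`: otherwise
`e ± (1 - |e|)` both lie in the ball and have midpoint `e`. For `‖e‖ ≤ 1` this is in turn
equivalent to `2 ∈ {‖e + f‖, ‖e - f‖}` for every unit vector `f`: if `|e| ≡ 1`, then `e = ±f`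
at a point where `|f|` attains `1`; if `|e t₀| < 1`, then the normalisation `f` of `1 - |e|`
vanishes where `|e| = 1`, so `|e| + |f| < 2` everywhere and, by compactness, `‖e ± f‖ < 2`.
The last condition only involves the pairs `{‖e + f‖, ‖e - f‖}`, which a surjective
phase-isometry preserves.
-/

open Set Metric

namespace ContinuousMap

variable {X : Type*} [TopologicalSpace X] [CompactSpace X]

lemma mem_closedBall_zero_one_iff {f : C(X, ℝ)} :
    f ∈ closedBall (0 : C(X, ℝ)) 1 ↔ ∀ t, |f t| ≤ 1 := by
  simp only [mem_closedBall_zero_iff, f.norm_le zero_le_one, Real.norm_eq_abs]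

lemma exists_abs_apply_eq_one_of_norm_eq_one {f : C(X, ℝ)} (hf : ‖f‖ = 1) :
    ∃ t, |f t| = 1 := by
  by_contra! h
  have hlt : ∀ t, ‖f t‖ < 1 := fun t =>
    lt_of_le_of_ne (hf ▸ f.norm_coe_le_norm t) (by simpa using h t)
  exact ((f.norm_lt_iff one_pos).2 hlt).ne hf

lemma abs_apply_eq_one_of_mem_extremePoints {e : C(X, ℝ)}
    (he : e ∈ extremePoints ℝ (closedBall (0 : C(X, ℝ)) 1)) (t : X) : |e t| = 1 := by
  have hball := mem_closedBall_zero_one_iff.1 he.1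
  set g : C(X, ℝ) := 1 - |e|
  have hg : ∀ s, g s = 1 - |e s| := fun s => by simp [g]
  have hplus : e + g ∈ closedBall (0 : C(X, ℝ)) 1 := mem_closedBall_zero_one_iff.2 fun s => by
    rw [add_apply, hg, abs_le]
    cases abs_cases (e s) <;> constructor <;> linarith [hball s]
  have hminus : e - g ∈ closedBall (0 : C(X, ℝ)) 1 := mem_closedBall_zero_one_iff.2 fun s => by
    rw [sub_apply, hg, abs_le]
    cases abs_cases (e s) <;> constructor <;> linarith [hball s]
  have hg0 : g = 0 := by
    simpa using ((mem_extremePoints.1 he).2 _ hplus _ hminus (mem_openSegment_add_sub e g)).1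
  have hgt : g t = 0 := by rw [hg0, zero_apply]
  linarith [hg t]

lemma mem_extremePoints_of_abs_apply_eq_one {e : C(X, ℝ)} (he : ∀ t, |e t| = 1) :
    e ∈ extremePoints ℝ (closedBall (0 : C(X, ℝ)) 1) := by
  refine mem_extremePoints.2
    ⟨mem_closedBall_zero_one_iff.2 fun t => (he t).le, fun x hx y hy hxy => ?_⟩
  have hpoint : ∀ t, x t = e t ∧ y t = e t := fun t => by
    have hext : e t ∈ extremePoints ℝ (closedBall (0 : ℝ) 1) := by
      rw [StrictConvexSpace.extremePoints_closedBall_eq_sphere]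
      simpa using he t
    refine (mem_extremePoints.1 hext).2 _ ?_ _ ?_ ?_
    · simpa using mem_closedBall_zero_one_iff.1 hx t
    · simpa using mem_closedBall_zero_one_iff.1 hy t
    · exact (image_openSegment ℝ (evalCLM ℝ t : C(X, ℝ) →L[ℝ] ℝ).toLinearMap.toAffineMap x y).subset
        (mem_image_of_mem _ hxy)
  exact ⟨ext fun t => (hpoint t).1, ext fun t => (hpoint t).2⟩

lemma mem_extremePoints_closedBall_iff {e : C(X, ℝ)} :
    e ∈ extremePoints ℝ (closedBall (0 : C(X, ℝ)) 1) ↔ ∀ t, |e t| = 1 :=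
  ⟨abs_apply_eq_one_of_mem_extremePoints, mem_extremePoints_of_abs_apply_eq_one⟩

lemma two_mem_of_abs_apply_eq_one {e f : C(X, ℝ)} (he : ∀ t, |e t| = 1) (hf : ‖f‖ = 1) :
    (2 : ℝ) ∈ ({‖e + f‖, ‖e - f‖} : Set ℝ) := by
  have he1 : ‖e‖ ≤ 1 :=
    mem_closedBall_zero_iff.1 (mem_closedBall_zero_one_iff.2 fun t => (he t).le)
  obtain ⟨t, ht⟩ := exists_abs_apply_eq_one_of_norm_eq_one hf
  rcases abs_eq_abs.1 ((he t).trans ht.symm) with h | h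
  · refine Or.inl (le_antisymm ?_ ((norm_add_le e f).trans (by linarith)))
    calc (2 : ℝ) = |e t + f t| := by rw [h, ← two_mul, abs_mul, ht]; norm_num
      _ ≤ ‖e + f‖ := by simpa using (e + f).norm_coe_le_norm t
  · refine Or.inr (le_antisymm ?_ ((norm_sub_le e f).trans (by linarith)))
    calc (2 : ℝ) = |e t - f t| := by rw [h, ← neg_add', abs_neg, ← two_mul, abs_mul, ht]; norm_num
      _ ≤ ‖e - f‖ := by simpa using (e - f).norm_coe_le_norm t

lemma exists_two_notMem_of_abs_apply_lt_one {e : C(X, ℝ)} (he : ‖e‖ ≤ 1) {t₀ : X}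
    (ht₀ : |e t₀| < 1) : ∃ f : C(X, ℝ), ‖f‖ = 1 ∧ (2 : ℝ) ∉ ({‖e + f‖, ‖e - f‖} : Set ℝ) := by
  have hball := mem_closedBall_zero_one_iff.1 (mem_closedBall_zero_iff.2 he)
  set g : C(X, ℝ) := 1 - |e|
  have hg : ∀ s, g s = 1 - |e s| := fun s => by simp [g]
  have hg0 : g ≠ 0 := fun h => by
    have hgt : g t₀ = 0 := by rw [h, zero_apply]
    linarith [hg t₀]
  set f : C(X, ℝ) := ‖g‖⁻¹ • g
  have hf : ‖f‖ = 1 := norm_smul_inv_norm hg0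
  have hsum : ∀ s, |e s| + |f s| < 2 := fun s => by
    rcases (hball s).lt_or_eq with hs | hs
    · have : |f s| ≤ 1 := by simpa [hf] using f.norm_coe_le_norm s
      linarith
    · have : f s = 0 := by simp [f, hg, hs]
      rw [hs, this, abs_zero]
      norm_num
  have hplus : ‖e + f‖ < 2 := ((e + f).norm_lt_iff two_pos).2 fun s =>
    (abs_add_le (e s) (f s)).trans_lt (hsum s)
  have hminus : ‖e - f‖ < 2 := ((e - f).norm_lt_iff two_pos).2 fun s =>
    (abs_sub (e s) (f s)).trans_lt (hsum s)
  simp only [mem_insert_iff, mem_singleton_iff, not_or]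
  exact ⟨f, hf, hplus.ne', hminus.ne'⟩

lemma mem_extremePoints_closedBall_iff_forall_two_mem {e : C(X, ℝ)} (he : ‖e‖ ≤ 1) :
    e ∈ extremePoints ℝ (closedBall (0 : C(X, ℝ)) 1) ↔
      ∀ f : C(X, ℝ), ‖f‖ = 1 → (2 : ℝ) ∈ ({‖e + f‖, ‖e - f‖} : Set ℝ) := by
  rw [mem_extremePoints_closedBall_iff]
  refine ⟨fun h f hf => two_mem_of_abs_apply_eq_one h hf, fun h t => ?_⟩
  by_contra ht
  have hlt := (mem_closedBall_zero_one_iff.1 (mem_closedBall_zero_iff.2 he) t).lt_of_ne ht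
  obtain ⟨f, hf, h2⟩ := exists_two_notMem_of_abs_apply_lt_one he hlt
  exact h2 (h f hf)

end ContinuousMap

theorem stmt8_general {K Ω : Type*} [TopologicalSpace K] [CompactSpace K]
    [TopologicalSpace Ω] [CompactSpace Ω]
    (T : C(K, ℝ) → C(Ω, ℝ))
    (hmap : ∀ f : C(K, ℝ), ‖f‖ = 1 → ‖T f‖ = 1)
    (hsurj : ∀ g : C(Ω, ℝ), ‖g‖ = 1 → ∃ f : C(K, ℝ), ‖f‖ = 1 ∧ T f = g)
    (hphase : ∀ f g : C(K, ℝ), ‖f‖ = 1 → ‖g‖ = 1 →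
      ({‖T f + T g‖, ‖T f - T g‖} : Set ℝ) = {‖f + g‖, ‖f - g‖})
    (e : C(K, ℝ)) (he : ‖e‖ = 1) :
    T e ∈ Set.extremePoints ℝ (Metric.closedBall (0 : C(Ω, ℝ)) 1) ↔
      e ∈ Set.extremePoints ℝ (Metric.closedBall (0 : C(K, ℝ)) 1) := by
  rw [ContinuousMap.mem_extremePoints_closedBall_iff_forall_two_mem (hmap e he).le,
    ContinuousMap.mem_extremePoints_closedBall_iff_forall_two_mem he.le]
  constructor
  · intro hT f hf
    rw [← hphase e f he hf]
    exact hT (T f) (hmap f hf)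
  · intro hE g hg
    obtain ⟨f, hf, rfl⟩ := hsurj g hg
    rw [hphase e f he hf]
    exact hE f hf

theorem stmt8 {K Ω : Type*} [TopologicalSpace K] [CompactSpace K] [T2Space K]
    [TopologicalSpace Ω] [CompactSpace Ω] [T2Space Ω]
    (T : C(K, ℝ) → C(Ω, ℝ))
    (hmap : ∀ f : C(K, ℝ), ‖f‖ = 1 → ‖T f‖ = 1)
    (hsurj : ∀ g : C(Ω, ℝ), ‖g‖ = 1 → ∃ f : C(K, ℝ), ‖f‖ = 1 ∧ T f = g)
    (hphase : ∀ f g : C(K, ℝ), ‖f‖ = 1 → ‖g‖ = 1 →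
      ({‖T f + T g‖, ‖T f - T g‖} : Set ℝ) = {‖f + g‖, ‖f - g‖})
    (e : C(K, ℝ)) (he : ‖e‖ = 1) :
    T e ∈ Set.extremePoints ℝ (Metric.closedBall (0 : C(Ω, ℝ)) 1) ↔
      e ∈ Set.extremePoints ℝ (Metric.closedBall (0 : C(K, ℝ)) 1) :=
  stmt8_general T hmap hsurj hphase e he
end

section
/- Let K, Ω be compact Hausdorff spaces, T : S_{C(K)} → S_{C(Ω)} a surjective phase-isometry, and σ : K → Ω the homeomorphism with T(F_t ∪ -F_t) = F_{σ(t)} ∪ -F_{σ(t)} for all t. Then for every t ∈ K and every f ∈ S_{C(K)}, T(f)(σ(t)) ∈ {f(t), -f(t)}. -/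
/-!
Write `M(f, g) = max ‖f + g‖ ‖f - g‖`; a phase-isometry preserves `M`. If `|g t| = 1` then
`M(f, g) ≥ 1 + |f t|`, while a Urysohn bump `g` peaking at `t` and supported where `f` is close
to `f t` gives `M(f, g) ≤ 1 + |f t| + ε`. Since `T` maps the functions peaking (up to sign) at `t`
onto those peaking at `σ t`, comparing `M` on both sides in either direction yields
`|T f (σ t)| = |f t|`.
-/

open Set

lemma max_eq_max_of_pair_eq {α : Type*} [ConditionallyCompleteLinearOrder α] {a b c d : α}
    (h : ({a, b} : Set α) = {c, d}) :
    max a b = max c d := by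
  simpa only [csSup_pair] using congrArg sSup h

lemma abs_add_abs_le_max_abs_add_abs_sub (b c : ℝ) : |b| + |c| ≤ max |b + c| |b - c| := by
  rcases abs_cases b with ⟨hb, -⟩ | ⟨hb, -⟩ <;> rcases abs_cases c with ⟨hc, -⟩ | ⟨hc, -⟩ <;>
    first
    | exact le_max_of_le_left (by linarith [le_abs_self (b + c), neg_le_abs (b + c)])
    | exact le_max_of_le_right (by linarith [le_abs_self (b - c), neg_le_abs (b - c)])

namespace ContinuousMap

variable {X : Type*} [TopologicalSpace X] [CompactSpace X]

lemma one_add_abs_apply_le_max_norm (f g : C(X, ℝ)) {x : X} (hg : |g x| = 1) :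
    1 + |f x| ≤ max ‖f + g‖ ‖f - g‖ := by
  calc 1 + |f x| = |f x| + |g x| := by rw [hg, add_comm]
    _ ≤ max |f x + g x| |f x - g x| := abs_add_abs_le_max_abs_add_abs_sub _ _
    _ ≤ max ‖f + g‖ ‖f - g‖ :=
      max_le_max ((f + g).norm_coe_le_norm x) ((f - g).norm_coe_le_norm x)

lemma norm_eq_one_and_abs_apply_eq_one_of_mem {x : X} {g : C(X, ℝ)}
    (hg : g ∈ {f : C(X, ℝ) | ‖f‖ = 1 ∧ f x = 1} ∪ -{f : C(X, ℝ) | ‖f‖ = 1 ∧ f x = 1}) :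
    ‖g‖ = 1 ∧ |g x| = 1 := by
  rcases hg with ⟨hnorm, hx⟩ | ⟨hnorm, hx⟩
  · exact ⟨hnorm, by rw [hx, abs_one]⟩
  · rw [norm_neg] at hnorm
    rw [neg_apply, neg_eq_iff_eq_neg] at hx
    exact ⟨hnorm, by rw [hx, abs_neg, abs_one]⟩

variable [T2Space X]

lemma exists_peak_max_norm_le (f : C(X, ℝ)) (hf : ‖f‖ ≤ 1) (x : X) {ε : ℝ} (hε : 0 < ε) :
    ∃ g : C(X, ℝ), ‖g‖ = 1 ∧ g x = 1 ∧ max ‖f + g‖ ‖f - g‖ ≤ 1 + |f x| + ε := by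
  set U : Set X := f ⁻¹' Metric.ball (f x) ε
  have hxU : x ∈ U := Metric.mem_ball_self hε
  obtain ⟨g, hg0, hg1, hg01⟩ := exists_continuous_zero_one_of_isClosed
    (Metric.isOpen_ball.preimage f.continuous).isClosed_compl isClosed_singleton
    (disjoint_singleton_right.mpr (not_not.mpr hxU))
  have hgx : g x = 1 := hg1 rfl
  have hg_abs : ∀ s, |g s| ≤ 1 := fun s => abs_le.mpr ⟨by linarith [(hg01 s).1], (hg01 s).2⟩
  have hgnorm : ‖g‖ = 1 :=
    le_antisymm ((g.norm_le zero_le_one).mpr hg_abs)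
      (by simpa [hgx] using g.norm_coe_le_norm x)
  have hbound : 0 ≤ 1 + |f x| + ε := by positivity
  have key : ∀ s c, |c| = 1 → |f s + c * g s| ≤ 1 + |f x| + ε := by
    intro s c hc
    have hfs : |f s| ≤ 1 := (f.norm_coe_le_norm s).trans hf
    by_cases hs : s ∈ U
    · have hclose : |f s - f x| < ε := by simpa [U, Real.dist_eq] using hs
      have hcg : |c * g s| ≤ 1 := by rw [abs_mul, hc, one_mul]; exact hg_abs s
      calc |f s + c * g s| ≤ |f s| + |c * g s| := abs_add_le _ _
        _ ≤ 1 + |f x| + ε := by linarith [abs_sub_abs_le_abs_sub (f s) (f x)]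
    · rw [show g s = 0 from hg0 hs, mul_zero, add_zero]
      linarith [abs_nonneg (f x)]
  refine ⟨g, hgnorm, hgx, max_le ?_ ?_⟩
  · exact (norm_le _ hbound).mpr fun s => by simpa using key s 1 abs_one
  · exact (norm_le _ hbound).mpr fun s => by
      simpa [sub_eq_add_neg] using key s (-1) (by rw [abs_neg, abs_one])

lemma abs_apply_le_of_forall_peak {Y : Type*} [TopologicalSpace Y] [CompactSpace Y]
    (u : C(X, ℝ)) (hu : ‖u‖ ≤ 1) (v : C(Y, ℝ)) (x : X) (y : Y)
    (h : ∀ g : C(X, ℝ), ‖g‖ = 1 → g x = 1 →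
      ∃ k : C(Y, ℝ), |k y| = 1 ∧ max ‖v + k‖ ‖v - k‖ ≤ max ‖u + g‖ ‖u - g‖) :
    |v y| ≤ |u x| := by
  refine le_of_forall_pos_le_add fun ε hε => ?_
  obtain ⟨g, hgnorm, hgx, hg⟩ := exists_peak_max_norm_le u hu x hε
  obtain ⟨k, hky, hk⟩ := h g hgnorm hgx
  linarith [one_add_abs_apply_le_max_norm v k hky]

end ContinuousMap

open ContinuousMap in
theorem stmt9_general {K Ω : Type*} [TopologicalSpace K] [CompactSpace K] [T2Space K]
    [TopologicalSpace Ω] [CompactSpace Ω] [T2Space Ω]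
    (T : C(K, ℝ) → C(Ω, ℝ))
    (hmap : ∀ f : C(K, ℝ), ‖f‖ = 1 → ‖T f‖ = 1)
    (hphase : ∀ f g : C(K, ℝ), ‖f‖ = 1 → ‖g‖ = 1 →
      ({‖T f + T g‖, ‖T f - T g‖} : Set ℝ) = {‖f + g‖, ‖f - g‖})
    (σ : K ≃ₜ Ω)
    (hσ : ∀ t : K,
      T '' ({f : C(K, ℝ) | ‖f‖ = 1 ∧ f t = 1} ∪ -{f : C(K, ℝ) | ‖f‖ = 1 ∧ f t = 1}) =
        {g : C(Ω, ℝ) | ‖g‖ = 1 ∧ g (σ t) = 1} ∪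
          -{g : C(Ω, ℝ) | ‖g‖ = 1 ∧ g (σ t) = 1}) :
    ∀ t : K, ∀ f : C(K, ℝ), ‖f‖ = 1 →
      T f (σ t) = f t ∨ T f (σ t) = -f t := by
  intro t f hf
  have hmax : ∀ g, ‖g‖ = 1 → max ‖T f + T g‖ ‖T f - T g‖ = max ‖f + g‖ ‖f - g‖ :=
    fun g hg => max_eq_max_of_pair_eq (hphase f g hf hg)
  refine abs_eq_abs.mp (le_antisymm ?_ ?_)
  · refine abs_apply_le_of_forall_peak f hf.le (T f) t (σ t) fun g hg hgt => ?_
    have hTg := (hσ t).subset (mem_image_of_mem T (Or.inl ⟨hg, hgt⟩))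
    exact ⟨T g, (norm_eq_one_and_abs_apply_eq_one_of_mem hTg).2, (hmax g hg).le⟩
  · refine abs_apply_le_of_forall_peak (T f) (hmap f hf).le f (σ t) t fun k hk hkt => ?_
    obtain ⟨g, hg, rfl⟩ := (hσ t).superset (Or.inl ⟨hk, hkt⟩)
    obtain ⟨hgnorm, hgt⟩ := norm_eq_one_and_abs_apply_eq_one_of_mem hg
    exact ⟨g, hgt, (hmax g hgnorm).ge⟩

theorem stmt9 {K Ω : Type*} [TopologicalSpace K] [CompactSpace K] [T2Space K]
    [TopologicalSpace Ω] [CompactSpace Ω] [T2Space Ω]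
    (T : C(K, ℝ) → C(Ω, ℝ))
    (hmap : ∀ f : C(K, ℝ), ‖f‖ = 1 → ‖T f‖ = 1)
    (hsurj : ∀ g : C(Ω, ℝ), ‖g‖ = 1 → ∃ f : C(K, ℝ), ‖f‖ = 1 ∧ T f = g)
    (hphase : ∀ f g : C(K, ℝ), ‖f‖ = 1 → ‖g‖ = 1 →
      ({‖T f + T g‖, ‖T f - T g‖} : Set ℝ) = {‖f + g‖, ‖f - g‖})
    (σ : K ≃ₜ Ω)
    (hσ : ∀ t : K,
      T '' ({f : C(K, ℝ) | ‖f‖ = 1 ∧ f t = 1} ∪ -{f : C(K, ℝ) | ‖f‖ = 1 ∧ f t = 1}) =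
        {g : C(Ω, ℝ) | ‖g‖ = 1 ∧ g (σ t) = 1} ∪
          -{g : C(Ω, ℝ) | ‖g‖ = 1 ∧ g (σ t) = 1}) :
    ∀ t : K, ∀ f : C(K, ℝ), ‖f‖ = 1 →
      T f (σ t) = f t ∨ T f (σ t) = -f t :=
  stmt9_general T hmap hphase σ hσ
end

section
/- Let Y be a real Banach space, K a compact Hausdorff space, and T : S_{C(K)} → S_Y a surjective phase-isometry with associated bijection Φ from K to maximal convex sets (satisfying T(F_t ∪ -F_t) = Φ(t) ∪ -Φ(t)). Then for every t ∈ K there exists a functional x* ∈ S_{Y*} such that x*(x) = 1 for all x ∈ Φ(t) and x*(T(f)) ∈ {f(t), -f(t)} for all f ∈ S_{C(K)}. -/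
/-!
Since `Φ(t)` is a nonempty convex subset of the unit sphere of `Y`, Hahn–Banach gives a norm-one
functional `x*` equal to `1` on `Φ(t)`, hence `x*(T g) = ±1` for every `g ∈ F_t` (`supFace t`).
For a unit vector `f` with `a = |f(t)|` there are `g₁, g₂ ∈ F_t` with `max ‖f ± g₁‖ ≤ 1 + a` and
`min ‖f ± g₂‖ ≤ 1 - a`. A phase-isometry preserves both the maximum and the minimum of
`‖f + g‖, ‖f - g‖`, and testing against `x*` turns these two bounds into `|x*(T f)| ≤ a` and
`a ≤ |x*(T f)|`.
-/

open Metric Set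

section PhaseIsometry

variable {X Y : Type*} [NormedAddCommGroup X] [NormedAddCommGroup Y]

def IsPhaseIsometry (T : X → Y) : Prop :=
  ∀ f g : X, ‖f‖ = 1 → ‖g‖ = 1 →
    ({‖T f + T g‖, ‖T f - T g‖} : Set ℝ) = {‖f + g‖, ‖f - g‖}

lemma max_eq_max_and_min_eq_min_of_pair_eq {a b c d : ℝ}
    (h : ({a, b} : Set ℝ) = {c, d}) : max a b = max c d ∧ min a b = min c d := by
  rcases Set.pair_eq_pair_iff.mp h with ⟨rfl, rfl⟩ | ⟨rfl, rfl⟩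
  · exact ⟨rfl, rfl⟩
  · exact ⟨max_comm _ _, min_comm _ _⟩

namespace IsPhaseIsometry

variable {T : X → Y} (hT : IsPhaseIsometry T) {f g : X}
include hT

lemma max_norm_add_sub_eq (hf : ‖f‖ = 1) (hg : ‖g‖ = 1) :
    max ‖T f + T g‖ ‖T f - T g‖ = max ‖f + g‖ ‖f - g‖ :=
  (max_eq_max_and_min_eq_min_of_pair_eq (hT f g hf hg)).1

lemma min_norm_add_sub_eq (hf : ‖f‖ = 1) (hg : ‖g‖ = 1) :
    min ‖T f + T g‖ ‖T f - T g‖ = min ‖f + g‖ ‖f - g‖ :=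
  (max_eq_max_and_min_eq_min_of_pair_eq (hT f g hf hg)).2

end IsPhaseIsometry

end PhaseIsometry

section Functional

variable {Y : Type*} [NormedAddCommGroup Y] [NormedSpace ℝ Y]

theorem exists_norm_eq_one_forall_eq_one_of_convex_subset_sphere {S : Set Y}
    (hS : S ⊆ sphere 0 1) (hconv : Convex ℝ S) (hne : S.Nonempty) :
    ∃ ℓ : Y →L[ℝ] ℝ, ‖ℓ‖ = 1 ∧ ∀ y ∈ S, ℓ y = 1 := by
  obtain ⟨y₀, hy₀⟩ := hne
  obtain ⟨f, u, hball, hSu⟩ := geometric_hahn_banach_open (convex_ball (0 : Y) 1) isOpen_ball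
    hconv (sphere_disjoint_ball.symm.mono_right hS)
  have hu : 0 < u := by simpa using hball 0 (mem_ball_self one_pos)
  have hclosedBall : ∀ z ∈ closedBall (0 : Y) 1, f z ≤ u := by
    rw [← closure_ball (0 : Y) one_ne_zero]
    exact closure_minimal (fun z hz => (hball z hz).le) (isClosed_le f.continuous continuous_const)
  have hfu : ‖f‖ ≤ u := by
    refine div_one u ▸ f.opNorm_bound_of_ball_bound one_pos u fun z hz => ?_
    have hnz := hclosedBall (-z) (by simpa using hz)
    rw [map_neg] at hnz
    exact abs_le.2 ⟨by linarith, hclosedBall z hz⟩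
  have hfS : ∀ y ∈ S, f y = u := fun y hy => le_antisymm
    (calc f y ≤ ‖f y‖ := Real.le_norm_self _
      _ ≤ ‖f‖ * ‖y‖ := f.le_opNorm y
      _ = ‖f‖ := by rw [mem_sphere_zero_iff_norm.1 (hS hy), mul_one]
      _ ≤ u := hfu)
    (hSu y hy)
  have hf : ‖f‖ = u := le_antisymm hfu <| by
    simpa [hfS y₀ hy₀, mem_sphere_zero_iff_norm.1 (hS hy₀), abs_of_pos hu] using f.le_opNorm y₀
  refine ⟨u⁻¹ • f, ?_, fun y hy => ?_⟩
  · rw [norm_smul, hf, norm_inv, Real.norm_of_nonneg hu.le, inv_mul_cancel₀ hu.ne']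
  · rw [smul_apply, hfS y hy, smul_eq_mul, inv_mul_cancel₀ hu.ne']

variable {ℓ : Y →L[ℝ] ℝ} {u v : Y} {a : ℝ}

lemma abs_apply_le_of_max_norm_add_sub_le (hℓ : ‖ℓ‖ ≤ 1) (hv : |ℓ v| = 1)
    (h : max ‖u + v‖ ‖u - v‖ ≤ 1 + a) : |ℓ u| ≤ a := by
  have hle : ∀ w, |ℓ w| ≤ ‖w‖ := fun w => (ℓ.le_of_opNorm_le hℓ w).trans_eq (one_mul _)
  have hadd := (hle (u + v)).trans ((le_max_left _ _).trans h)
  have hsub := (hle (u - v)).trans ((le_max_right _ _).trans h)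
  rw [map_add] at hadd
  rw [map_sub] at hsub
  rcases (abs_eq zero_le_one).mp hv with hv' | hv' <;> rw [hv'] at hadd hsub <;>
    rw [abs_le] at hadd hsub ⊢ <;> constructor <;> linarith [hadd.1, hadd.2, hsub.1, hsub.2]

lemma le_abs_apply_of_min_norm_add_sub_le (hℓ : ‖ℓ‖ ≤ 1) (hv : |ℓ v| = 1)
    (h : min ‖u + v‖ ‖u - v‖ ≤ 1 - a) : a ≤ |ℓ u| := by
  have hle : ∀ w, |ℓ w| ≤ ‖w‖ := fun w => (ℓ.le_of_opNorm_le hℓ w).trans_eq (one_mul _)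
  rcases min_le_iff.mp h with h | h
  · have := (hle (u + v)).trans h
    rw [map_add] at this
    have hv' : |ℓ v| ≤ |ℓ u + ℓ v| + |ℓ u| := by simpa using abs_sub (ℓ u + ℓ v) (ℓ u)
    linarith
  · have := (hle (u - v)).trans h
    rw [map_sub] at this
    have hv' : |ℓ v| ≤ |ℓ u| + |ℓ u - ℓ v| := by simpa using abs_sub (ℓ u) (ℓ u - ℓ v)
    linarith

end Functional

section Face

variable {K : Type*} [TopologicalSpace K] [CompactSpace K]

def supFace (t : K) : Set C(K, ℝ) := {f | ‖f‖ = 1 ∧ f t = 1}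

lemma abs_apply_le_one {f : C(K, ℝ)} (hf : ‖f‖ ≤ 1) (s : K) : |f s| ≤ 1 :=
  (f.norm_coe_le_norm s).trans hf

lemma mem_supFace_of_abs_le_one {g : C(K, ℝ)} {t : K} (hg : ∀ s, |g s| ≤ 1) (ht : g t = 1) :
    g ∈ supFace t :=
  ⟨le_antisymm ((g.norm_le zero_le_one).2 hg) (by simpa [ht] using g.norm_coe_le_norm t), ht⟩

lemma one_mem_supFace (t : K) : (1 : C(K, ℝ)) ∈ supFace t :=
  mem_supFace_of_abs_le_one (by simp) rfl

lemma exists_mem_supFace_max_norm_add_sub_le {f : C(K, ℝ)} (hf : ‖f‖ ≤ 1) (t : K) :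
    ∃ g ∈ supFace t, max ‖f + g‖ ‖f - g‖ ≤ 1 + |f t| := by
  set a := |f t|
  set g : C(K, ℝ) := 0 ⊔ (1 ⊓ (ContinuousMap.const K (1 + a) - |f|))
  have hg : ∀ s, g s = max 0 (min 1 (1 + a - |f s|)) := fun s => by simp [g]
  have hfg : ∀ s, 0 ≤ g s ∧ |f s| + g s ≤ 1 + a := fun s => by
    have := abs_apply_le_one hf s
    rw [hg]
    constructor
    · exact le_max_left _ _
    · have : max 0 (min 1 (1 + a - |f s|)) ≤ 1 + a - |f s| :=
        max_le (by linarith [abs_nonneg (f t)]) (min_le_right _ _)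
      linarith
  refine ⟨g, mem_supFace_of_abs_le_one (fun s => ?_) ?_, max_le ?_ ?_⟩
  · rw [hg, abs_of_nonneg (le_max_left _ _)]
    exact max_le zero_le_one (min_le_left _ _)
  · simp [hg, a]
  all_goals
    refine (ContinuousMap.norm_le _ (by positivity)).2 fun s => ?_
    obtain ⟨h0, h1⟩ := hfg s
    simp only [ContinuousMap.add_apply, ContinuousMap.sub_apply, Real.norm_eq_abs]
  · linarith [abs_add_le (f s) (g s), abs_of_nonneg h0]
  · linarith [abs_sub (f s) (g s), abs_of_nonneg h0]

lemma exists_mem_supFace_norm_sub_le {f : C(K, ℝ)} (hf : ‖f‖ ≤ 1) (t : K) :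
    ∃ g ∈ supFace t, ‖f - g‖ ≤ 1 - f t := by
  set a := f t
  set g : C(K, ℝ) := 1 ⊓ (f + ContinuousMap.const K (1 - a))
  have hg : ∀ s, g s = min 1 (f s + (1 - a)) := fun s => by simp [g]
  have hf1 : ∀ s, -1 ≤ f s ∧ f s ≤ 1 := fun s => abs_le.1 (abs_apply_le_one hf s)
  have ha : a ≤ 1 := (hf1 t).2
  refine ⟨g, mem_supFace_of_abs_le_one (fun s => ?_) ?_, ?_⟩
  · rw [hg, abs_le]
    exact ⟨le_min (by norm_num) (by linarith [hf1 s]), min_le_left _ _⟩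
  · simp [hg, a]
  · refine (ContinuousMap.norm_le _ (by linarith)).2 fun s => ?_
    rw [ContinuousMap.sub_apply, Real.norm_eq_abs, hg, abs_le]
    rcases le_total 1 (f s + (1 - a)) with h | h
    · rw [min_eq_left h]
      constructor <;> linarith [hf1 s]
    · rw [min_eq_right h]
      constructor <;> linarith

lemma exists_mem_supFace_min_norm_add_sub_le {f : C(K, ℝ)} (hf : ‖f‖ ≤ 1) (t : K) :
    ∃ g ∈ supFace t, min ‖f + g‖ ‖f - g‖ ≤ 1 - |f t| := by
  rcases le_total 0 (f t) with ht | ht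
  · obtain ⟨g, hg, hfg⟩ := exists_mem_supFace_norm_sub_le hf t
    exact ⟨g, hg, min_le_of_right_le (by rwa [abs_of_nonneg ht])⟩
  · obtain ⟨g, hg, hfg⟩ := exists_mem_supFace_norm_sub_le (f := -f) (by rwa [norm_neg]) t
    refine ⟨g, hg, min_le_of_left_le ?_⟩
    rw [← norm_neg, neg_add', abs_of_nonpos ht]
    simpa using hfg

end Face

theorem stmt13_general {K : Type*} [TopologicalSpace K] [CompactSpace K]
    {Y : Type*} [NormedAddCommGroup Y] [NormedSpace ℝ Y]
    (T : C(K, ℝ) → Y)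
    (hphase : ∀ f g : C(K, ℝ), ‖f‖ = 1 → ‖g‖ = 1 →
      ({‖T f + T g‖, ‖T f - T g‖} : Set ℝ) = {‖f + g‖, ‖f - g‖})
    (Φ : K → Set Y)
    (hΦmax : ∀ t : K, Φ t ⊆ {y : Y | ‖y‖ = 1} ∧ Convex ℝ (Φ t) ∧
      ∀ C : Set Y, Convex ℝ C → C ⊆ {y : Y | ‖y‖ = 1} → Φ t ⊆ C → C = Φ t)
    (hΦ : ∀ t : K,
      T '' ({f : C(K, ℝ) | ‖f‖ = 1 ∧ f t = 1} ∪ -{f : C(K, ℝ) | ‖f‖ = 1 ∧ f t = 1}) =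
        Φ t ∪ -Φ t) :
    ∀ t : K, ∃ xstar : Y →L[ℝ] ℝ, ‖xstar‖ = 1 ∧
      (∀ x ∈ Φ t, xstar x = 1) ∧
      (∀ f : C(K, ℝ), ‖f‖ = 1 → xstar (T f) = f t ∨ xstar (T f) = -f t) := by
  intro t
  have hT : IsPhaseIsometry T := hphase
  obtain ⟨hsub, hconv, -⟩ := hΦmax t
  have hface : ∀ g ∈ supFace t, T g ∈ Φ t ∪ -Φ t := fun g hg =>
    hΦ t ▸ mem_image_of_mem T (Or.inl hg)
  have hne : (Φ t).Nonempty := by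
    rcases hface 1 (one_mem_supFace t) with h | h
    exacts [⟨_, h⟩, ⟨_, h⟩]
  obtain ⟨ℓ, hℓ, hℓΦ⟩ := exists_norm_eq_one_forall_eq_one_of_convex_subset_sphere
    (fun y hy => mem_sphere_zero_iff_norm.2 (hsub hy)) hconv hne
  have hℓface : ∀ g ∈ supFace t, |ℓ (T g)| = 1 := fun g hg => by
    rcases hface g hg with h | h
    · rw [hℓΦ _ h, abs_one]
    · rw [← abs_neg, ← map_neg, hℓΦ _ h, abs_one]
  refine ⟨ℓ, hℓ, hℓΦ, fun f hf => abs_eq_abs.mp (le_antisymm ?_ ?_)⟩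
  · obtain ⟨g, hg, hfg⟩ := exists_mem_supFace_max_norm_add_sub_le hf.le t
    exact abs_apply_le_of_max_norm_add_sub_le hℓ.le (hℓface g hg)
      (hT.max_norm_add_sub_eq hf hg.1 ▸ hfg)
  · obtain ⟨g, hg, hfg⟩ := exists_mem_supFace_min_norm_add_sub_le hf.le t
    exact le_abs_apply_of_min_norm_add_sub_le hℓ.le (hℓface g hg)
      (hT.min_norm_add_sub_eq hf hg.1 ▸ hfg)

theorem stmt13 {K : Type*} [TopologicalSpace K] [CompactSpace K] [T2Space K]
    {Y : Type*} [NormedAddCommGroup Y] [NormedSpace ℝ Y] [CompleteSpace Y]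
    (T : C(K, ℝ) → Y)
    (hmap : ∀ f : C(K, ℝ), ‖f‖ = 1 → ‖T f‖ = 1)
    (hsurj : ∀ y : Y, ‖y‖ = 1 → ∃ f : C(K, ℝ), ‖f‖ = 1 ∧ T f = y)
    (hphase : ∀ f g : C(K, ℝ), ‖f‖ = 1 → ‖g‖ = 1 →
      ({‖T f + T g‖, ‖T f - T g‖} : Set ℝ) = {‖f + g‖, ‖f - g‖})
    (Φ : K → Set Y)
    (hΦmax : ∀ t : K, Φ t ⊆ {y : Y | ‖y‖ = 1} ∧ Convex ℝ (Φ t) ∧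
      ∀ C : Set Y, Convex ℝ C → C ⊆ {y : Y | ‖y‖ = 1} → Φ t ⊆ C → C = Φ t)
    (hΦ : ∀ t : K,
      T '' ({f : C(K, ℝ) | ‖f‖ = 1 ∧ f t = 1} ∪ -{f : C(K, ℝ) | ‖f‖ = 1 ∧ f t = 1}) =
        Φ t ∪ -Φ t) :
    ∀ t : K, ∃ xstar : Y →L[ℝ] ℝ, ‖xstar‖ = 1 ∧
      (∀ x ∈ Φ t, xstar x = 1) ∧
      (∀ f : C(K, ℝ), ‖f‖ = 1 → xstar (T f) = f t ∨ xstar (T f) = -f t) :=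
  stmt13_general T hphase Φ hΦmax hΦ
end

section
/- Let K be a compact Hausdorff space, f ∈ S_{C(K)}, t ∈ K with 0 ≤ f(t) < 1, and ε > 0. Then there exists ψ ∈ S_{C(K)} with ψ(t) = 1 and ‖f − ψ‖ ≤ 1 − f(t) + ε. -/
/-!
Take an Urysohn function φ with φ(t) = 1 that vanishes wherever |f - f(t)| ≥ ε, and push f towards
the constant 1 on the support of φ: ψ = f + φ (1 - f) = (1 - φ) f + φ is pointwise a convex
combination of f and 1, so ‖ψ‖ ≤ 1 = ψ(t). Where φ ≠ 0 the value f differs from f(t) by less than ε,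
so |f - ψ| = φ (1 - f) ≤ 1 - f(t) + ε.
-/

open Set

theorem exists_bump_at_vanishing_off_abs_sub_lt {K : Type*} [TopologicalSpace K] [NormalSpace K]
    [T1Space K] (f : C(K, ℝ)) (t : K) {ε : ℝ} (hε : 0 < ε) :
    ∃ φ : C(K, ℝ), φ t = 1 ∧ (∀ x, φ x ∈ Icc (0 : ℝ) 1) ∧ ∀ x, ε ≤ |f x - f t| → φ x = 0 := by
  have hclosed : IsClosed {x | ε ≤ |f x - f t|} :=
    isClosed_le continuous_const (by fun_prop)
  have hdisj : Disjoint {x | ε ≤ |f x - f t|} {t} := by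
    simpa [Set.disjoint_singleton_right] using hε
  obtain ⟨φ, hφ0, hφ1, hφ01⟩ :=
    exists_continuous_zero_one_of_isClosed hclosed isClosed_singleton hdisj
  exact ⟨φ, hφ1 rfl, hφ01, fun x hx => hφ0 hx⟩

theorem abs_add_mul_one_sub_le_one {a c : ℝ} (ha : |a| ≤ 1) (hc : c ∈ Icc (0 : ℝ) 1) :
    |a + c * (1 - a)| ≤ 1 := by
  obtain ⟨ha₁, ha₂⟩ := abs_le.mp ha
  rw [abs_le]
  constructor <;> nlinarith [hc.1, hc.2]

namespace ContinuousMap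

variable {K : Type*} [TopologicalSpace K] [CompactSpace K]

theorem norm_add_mul_one_sub_le_one {f φ : C(K, ℝ)} (hf : ‖f‖ ≤ 1)
    (hφ : ∀ x, φ x ∈ Icc (0 : ℝ) 1) : ‖f + φ * (1 - f)‖ ≤ 1 := by
  refine (norm_le _ zero_le_one).mpr fun x => ?_
  have hfx : |f x| ≤ 1 := (f.norm_coe_le_norm x).trans hf
  simpa using abs_add_mul_one_sub_le_one hfx (hφ x)

theorem norm_mul_one_sub_le {f φ : C(K, ℝ)} (hf : ‖f‖ ≤ 1) (t : K) {ε : ℝ} (hε : 0 < ε)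
    (hφ : ∀ x, φ x ∈ Icc (0 : ℝ) 1) (hφ0 : ∀ x, ε ≤ |f x - f t| → φ x = 0) :
    ‖φ * (1 - f)‖ ≤ 1 - f t + ε := by
  have hf_le (x : K) : f x ≤ 1 := (le_abs_self _).trans ((f.norm_coe_le_norm x).trans hf)
  refine (norm_le _ (by linarith [hf_le t])).mpr fun x => ?_
  simp only [coe_mul, coe_sub, coe_one, Pi.mul_apply, Pi.sub_apply, Pi.one_apply,
    Real.norm_eq_abs]
  by_cases hx : ε ≤ |f x - f t|
  · simp only [hφ0 x hx, zero_mul, abs_zero]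
    linarith [hf_le t]
  · have hclose := (abs_lt.mp (not_le.mp hx)).1
    have hfx := hf_le x
    rw [abs_of_nonneg (mul_nonneg (hφ x).1 (by linarith))]
    nlinarith [(hφ x).1, (hφ x).2]

end ContinuousMap

theorem stmt18_general {K : Type*} [TopologicalSpace K] [CompactSpace K] [T2Space K]
    (f : C(K, ℝ)) (hf : ‖f‖ = 1) (t : K)
    (ε : ℝ) (hε : 0 < ε) :
    ∃ ψ : C(K, ℝ), ‖ψ‖ = 1 ∧ ψ t = 1 ∧ ‖f - ψ‖ ≤ 1 - f t + ε := by
  obtain ⟨φ, hφt, hφ, hφ0⟩ := exists_bump_at_vanishing_off_abs_sub_lt f t hε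
  set ψ := f + φ * (1 - f)
  have hψt : ψ t = 1 := by simp [ψ, hφt]
  have hψ : ‖ψ‖ = 1 :=
    le_antisymm (ContinuousMap.norm_add_mul_one_sub_le_one hf.le hφ)
      (by simpa [hψt] using ψ.norm_coe_le_norm t)
  have hfψ : f - ψ = -(φ * (1 - f)) := by simp [ψ]
  refine ⟨ψ, hψ, hψt, ?_⟩
  rw [hfψ, norm_neg]
  exact ContinuousMap.norm_mul_one_sub_le hf.le t hε hφ hφ0

theorem stmt18 {K : Type*} [TopologicalSpace K] [CompactSpace K] [T2Space K]
    (f : C(K, ℝ)) (hf : ‖f‖ = 1) (t : K) (hft : 0 ≤ f t) (hft1 : f t < 1)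
    (ε : ℝ) (hε : 0 < ε) :
    ∃ ψ : C(K, ℝ), ‖ψ‖ = 1 ∧ ψ t = 1 ∧ ‖f - ψ‖ ≤ 1 - f t + ε :=
  stmt18_general f hf t ε hε
end

section
/- Let K, Ω be compact Hausdorff spaces, T : S_{C(K)} → S_{C(Ω)} a surjective phase-isometry, and σ : K → Ω the bijection with T(F_t ∪ -F_t) = F_{σ(t)} ∪ -F_{σ(t)} for each t. Then for every f ∈ S_{C(K)}, σ maps {t ∈ K : |f(t)| < 1} onto {s ∈ Ω : |T(f)(s)| < 1}. -/
/-!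
A phase-isometry determines a unit vector up to sign: if `T f = T g` then `0 = ‖T f - T g‖`
is one of `‖f + g‖, ‖f - g‖`, so `f = ± g`. Hence `f ∈ ±F_t` exactly when `T f ∈ ±F_{σ t}`,
i.e. `|f t| = 1 ↔ |T f (σ t)| = 1`. On the unit sphere `|f t| < 1` is the negation of
`|f t| = 1`, and `σ` is a bijection, so the two sets correspond.
-/

theorem eq_or_eq_neg_of_phase_eq {E F : Type*} [SeminormedAddCommGroup E] [NormedAddCommGroup F]
    {T : F → E}
    (hphase : ∀ f g : F, ‖f‖ = 1 → ‖g‖ = 1 →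
      ({‖T f + T g‖, ‖T f - T g‖} : Set ℝ) = {‖f + g‖, ‖f - g‖})
    {f g : F} (hf : ‖f‖ = 1) (hg : ‖g‖ = 1) (h : T f = T g) : f = g ∨ f = -g := by
  have hzero : (0 : ℝ) ∈ ({‖f + g‖, ‖f - g‖} : Set ℝ) := by
    rw [← hphase f g hf hg, h, sub_self, norm_zero]
    exact Or.inr rfl
  rcases hzero with h0 | h0
  · exact Or.inr (eq_neg_of_add_eq_zero_left (norm_eq_zero.mp h0.symm))
  · exact Or.inl (sub_eq_zero.mp (norm_eq_zero.mp (Set.mem_singleton_iff.mp h0).symm))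

namespace ContinuousMap

variable {X : Type*} [TopologicalSpace X] [CompactSpace X]

theorem mem_peak_union_neg_iff (f : C(X, ℝ)) (x : X) :
    f ∈ {g : C(X, ℝ) | ‖g‖ = 1 ∧ g x = 1} ∪ -{g : C(X, ℝ) | ‖g‖ = 1 ∧ g x = 1} ↔
      ‖f‖ = 1 ∧ |f x| = 1 := by
  simp only [Set.mem_union, Set.mem_neg, Set.mem_ofPred_eq, norm_neg, neg_apply,
    neg_eq_iff_eq_neg, abs_eq zero_le_one]
  tauto

theorem abs_apply_lt_one_iff {f : C(X, ℝ)} (hf : ‖f‖ = 1) (x : X) :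
    |f x| < 1 ↔ |f x| ≠ 1 := by
  have hle : |f x| ≤ 1 := hf ▸ f.norm_coe_le_norm x
  exact ⟨ne_of_lt, hle.lt_of_ne⟩

end ContinuousMap

open ContinuousMap in
theorem abs_apply_eq_one_iff_of_image_peak_union_neg {K Ω : Type*}
    [TopologicalSpace K] [CompactSpace K] [TopologicalSpace Ω] [CompactSpace Ω]
    {T : C(K, ℝ) → C(Ω, ℝ)}
    (hmap : ∀ f : C(K, ℝ), ‖f‖ = 1 → ‖T f‖ = 1)
    (hphase : ∀ f g : C(K, ℝ), ‖f‖ = 1 → ‖g‖ = 1 →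
      ({‖T f + T g‖, ‖T f - T g‖} : Set ℝ) = {‖f + g‖, ‖f - g‖})
    {t : K} {s : Ω}
    (hpeak : T '' ({f : C(K, ℝ) | ‖f‖ = 1 ∧ f t = 1} ∪ -{f : C(K, ℝ) | ‖f‖ = 1 ∧ f t = 1}) =
      {g : C(Ω, ℝ) | ‖g‖ = 1 ∧ g s = 1} ∪ -{g : C(Ω, ℝ) | ‖g‖ = 1 ∧ g s = 1})
    {f : C(K, ℝ)} (hf : ‖f‖ = 1) : |f t| = 1 ↔ |T f s| = 1 := by
  constructor
  · intro hft
    have hmem := Set.mem_image_of_mem T ((mem_peak_union_neg_iff f t).mpr ⟨hf, hft⟩)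
    rw [hpeak, mem_peak_union_neg_iff] at hmem
    exact hmem.2
  · intro hTfs
    have hmem := (mem_peak_union_neg_iff (T f) s).mpr ⟨hmap f hf, hTfs⟩
    rw [← hpeak] at hmem
    obtain ⟨g, hg, hTg⟩ := hmem
    rw [mem_peak_union_neg_iff] at hg
    rcases eq_or_eq_neg_of_phase_eq hphase hf hg.1 hTg.symm with rfl | rfl
    · exact hg.2
    · simpa using hg.2

theorem stmt19_general {K Ω : Type*} [TopologicalSpace K] [CompactSpace K]
    [TopologicalSpace Ω] [CompactSpace Ω]
    (T : C(K, ℝ) → C(Ω, ℝ))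
    (hmap : ∀ f : C(K, ℝ), ‖f‖ = 1 → ‖T f‖ = 1)
    (hphase : ∀ f g : C(K, ℝ), ‖f‖ = 1 → ‖g‖ = 1 →
      ({‖T f + T g‖, ‖T f - T g‖} : Set ℝ) = {‖f + g‖, ‖f - g‖})
    (σ : K → Ω) (hbij : Function.Bijective σ)
    (hσ : ∀ t : K,
      T '' ({f : C(K, ℝ) | ‖f‖ = 1 ∧ f t = 1} ∪ -{f : C(K, ℝ) | ‖f‖ = 1 ∧ f t = 1}) =
        {g : C(Ω, ℝ) | ‖g‖ = 1 ∧ g (σ t) = 1} ∪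
          -{g : C(Ω, ℝ) | ‖g‖ = 1 ∧ g (σ t) = 1}) :
    ∀ f : C(K, ℝ), ‖f‖ = 1 →
      σ '' {t : K | |f t| < 1} = {s : Ω | |T f s| < 1} := by
  intro f hf
  ext s
  obtain ⟨t, rfl⟩ := hbij.2 s
  rw [hbij.1.mem_set_image, Set.mem_ofPred_eq, Set.mem_ofPred_eq,
    ContinuousMap.abs_apply_lt_one_iff hf, ContinuousMap.abs_apply_lt_one_iff (hmap f hf)]
  exact (abs_apply_eq_one_iff_of_image_peak_union_neg hmap hphase (hσ t) hf).not

theorem stmt19 {K Ω : Type*} [TopologicalSpace K] [CompactSpace K] [T2Space K]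
    [TopologicalSpace Ω] [CompactSpace Ω] [T2Space Ω]
    (T : C(K, ℝ) → C(Ω, ℝ))
    (hmap : ∀ f : C(K, ℝ), ‖f‖ = 1 → ‖T f‖ = 1)
    (hsurj : ∀ g : C(Ω, ℝ), ‖g‖ = 1 → ∃ f : C(K, ℝ), ‖f‖ = 1 ∧ T f = g)
    (hphase : ∀ f g : C(K, ℝ), ‖f‖ = 1 → ‖g‖ = 1 →
      ({‖T f + T g‖, ‖T f - T g‖} : Set ℝ) = {‖f + g‖, ‖f - g‖})
    (σ : K → Ω) (hbij : Function.Bijective σ)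
    (hσ : ∀ t : K,
      T '' ({f : C(K, ℝ) | ‖f‖ = 1 ∧ f t = 1} ∪ -{f : C(K, ℝ) | ‖f‖ = 1 ∧ f t = 1}) =
        {g : C(Ω, ℝ) | ‖g‖ = 1 ∧ g (σ t) = 1} ∪
          -{g : C(Ω, ℝ) | ‖g‖ = 1 ∧ g (σ t) = 1}) :
    ∀ f : C(K, ℝ), ‖f‖ = 1 →
      σ '' {t : K | |f t| < 1} = {s : Ω | |T f s| < 1} :=
  stmt19_general T hmap hphase σ hbij hσ
end
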